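/- arXiv:2212.05872 — 4 statements merged into one kernel-verified Lean document; each statement's English description precedes it below -/
import Mathlib

section
/- Let u be a reduced eigenfunction for (c, μ, λ), where (α,β) ⊆ (0,H) is a well for c with threshold c₁ and c_m μ² ≤ λ < c₁ μ². Set ξ = √(2(μ² − λ/c₁)) and w = u². Then for every y ∈ [0,H] \ (α,β), one has w(y) ≤ S · (λ/ξ) · exp(−ξ · dist(y,(α,β))) · ∫_α^β w(z) dz, where S = sup_{y'∈(α,β)} |(c₁ − c(y'))/(c₁ c(y'))| and dist(y,(α,β)) is the distance from y to the interval (α,β). -/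
/-!
Write `q = lam / c - μ²` and `κ = √(μ² - lam / c₁)`, so that `q + κ² = lam (1 / c - 1 / c₁)` is
`≤ 0` a.e. outside the well and `≤ lam S` inside it. Since `u'' = -q u` with `u'` absolutely
continuous, integration by parts on `[a, b]` together with `2 κ |u u'| ≤ u'² + κ² u²` gives
  `u(a) u'(a) - u(b) u'(b) + κ |u(b)² - u(a)²| ≤ ∫_a^b (q + κ²) u²`.
By the Dirichlet conditions this forces `u u' ≤ -κ u²` right of the well and `u u' ≥ κ u²` left
of it, so `u²` decays like `exp (-2 κ dist(y, (α, β)))` from the endpoints of the well; on the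
well itself it bounds `2 κ u(α)²` and `2 κ u(β)²` by `lam S ∫_α^β u²`. Finally `ξ = √2 κ ≤ 2 κ`.
-/

open Set MeasureTheory Filter

/-- `u` (with derivative `u'`) is a reduced eigenfunction for `(c, μ, lam)` on `[0,H]`:
a nontrivial C¹ Carathéodory solution of `c u'' + (lam - c μ²) u = 0` with Dirichlet
boundary conditions. -/
def ReducedEigenfunction (H : ℝ) (c : ℝ → ℝ) (μ lam : ℝ) (u u' : ℝ → ℝ) : Prop :=
  (∀ y ∈ Set.Icc (0:ℝ) H, HasDerivWithinAt u (u' y) (Set.Icc (0:ℝ) H) y) ∧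
  ContinuousOn u' (Set.Icc (0:ℝ) H) ∧
  (∀ y ∈ Set.Icc (0:ℝ) H, u' y = u' 0 - ∫ t in (0:ℝ)..y, (lam / c t - μ ^ 2) * u t) ∧
  (∃ y ∈ Set.Icc (0:ℝ) H, u y ≠ 0) ∧
  u 0 = 0 ∧ u H = 0

theorem absolutelyContinuousOnInterval_of_hasDerivWithinAt {u u' : ℝ → ℝ} {a b : ℝ}
    (hab : a ≤ b) (hu : ∀ x ∈ Icc a b, HasDerivWithinAt u (u' x) (Icc a b) x)
    (hu' : ContinuousOn u' (Icc a b)) : AbsolutelyContinuousOnInterval u a b := by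
  obtain ⟨C, hC⟩ := isCompact_Icc.exists_bound_of_continuousOn hu'
  rw [← uIcc_of_le hab] at hu hC
  refine (Convex.lipschitzOnWith_of_nnnorm_hasDerivWithin_le (C := C.toNNReal)
    (convex_uIcc a b) hu fun x hx => ?_).absolutelyContinuousOnInterval
  rw [← NNReal.coe_le_coe, coe_nnnorm]
  exact (hC x hx).trans (Real.le_coe_toNNReal C)

theorem integral_mul_eq_of_eq_sub_integral {u u' f : ℝ → ℝ} {a b : ℝ} (hab : a ≤ b)
    (hu : ∀ x ∈ Icc a b, HasDerivWithinAt u (u' x) (Icc a b) x)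
    (hu' : ContinuousOn u' (Icc a b)) (hf : IntervalIntegrable f volume a b)
    (heq : ∀ y ∈ Icc a b, u' y = u' a - ∫ t in a..y, f t) :
    ∫ t in a..b, f t * u t = u a * u' a - u b * u' b + ∫ t in a..b, u' t ^ 2 := by
  set G : ℝ → ℝ := fun y => u' a - ∫ t in a..y, f t
  have hG : AbsolutelyContinuousOnInterval G a b := by
    have hconst : AbsolutelyContinuousOnInterval (fun _ : ℝ => u' a) a b :=
      (LipschitzWith.const (u' a)).lipschitzOnWith.absolutelyContinuousOnInterval
    exact hconst.sub (hf.absolutelyContinuousOnInterval_intervalIntegral left_mem_uIcc)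
  have hibp := (absolutelyContinuousOnInterval_of_hasDerivWithinAt hab hu
    hu').integral_mul_deriv_eq_deriv_mul hG
  have hderivG : ∫ t in a..b, u t * deriv G t = -∫ t in a..b, f t * u t := by
    rw [← intervalIntegral.integral_neg]
    refine intervalIntegral.integral_congr_ae ?_
    filter_upwards [hf.ae_hasDerivAt_integral] with x hx hxab
    have hx' := ((hx (uIoc_subset_uIcc hxab) a left_mem_uIcc).const_sub (u' a)).deriv
    rw [hx']; ring
  have hderivu : ∫ t in a..b, deriv u t * G t = ∫ t in a..b, u' t ^ 2 := by
    refine intervalIntegral.integral_congr_ae ?_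
    filter_upwards [Measure.ae_ne volume b] with x hxb hxab
    rw [uIoc_of_le hab] at hxab
    have hx : x ∈ Ioo a b := ⟨hxab.1, lt_of_le_of_ne hxab.2 hxb⟩
    rw [((hu x (Ioo_subset_Icc_self hx)).hasDerivAt (Icc_mem_nhds hx.1 hx.2)).deriv,
      show G x = u' x from (heq x (Ioo_subset_Icc_self hx)).symm, sq]
  have hGa : G a = u' a := by simp [G]
  have hGb : G b = u' b := (heq b (right_mem_Icc.2 hab)).symm
  rw [hderivG, hderivu, hGa, hGb] at hibp
  linarith

theorem mul_abs_sq_sub_sq_le_integral {u u' : ℝ → ℝ} {a b κ : ℝ} (hab : a ≤ b)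
    (hu : ∀ x ∈ Icc a b, HasDerivWithinAt u (u' x) (Icc a b) x)
    (hu' : ContinuousOn u' (Icc a b)) (hκ : 0 ≤ κ) :
    κ * |u b ^ 2 - u a ^ 2| ≤ (∫ t in a..b, u' t ^ 2) + κ ^ 2 * ∫ t in a..b, u t ^ 2 := by
  have hcont : ContinuousOn u (Icc a b) := fun x hx => (hu x hx).continuousWithinAt
  have hint : ∀ g : ℝ → ℝ, ContinuousOn g (Icc a b) → IntervalIntegrable g volume a b :=
    fun g hg => hg.intervalIntegrable_of_Icc hab
  have hftc : ∫ t in a..b, 2 * u t * u' t = u b ^ 2 - u a ^ 2 := by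
    refine intervalIntegral.integral_eq_sub_of_hasDerivAt_of_le hab (hcont.pow 2)
      (fun x hx => ?_) (hint _ (by fun_prop (disch := assumption)))
    have := ((hu x (Ioo_subset_Icc_self hx)).hasDerivAt (Icc_mem_nhds hx.1 hx.2)).pow 2
    simpa using this
  calc κ * |u b ^ 2 - u a ^ 2| = |∫ t in a..b, κ * (2 * u t * u' t)| := by
        rw [intervalIntegral.integral_const_mul, hftc, abs_mul, abs_of_nonneg hκ]
    _ ≤ ∫ t in a..b, |κ * (2 * u t * u' t)| :=
        intervalIntegral.abs_integral_le_integral_abs hab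
    _ ≤ ∫ t in a..b, (u' t ^ 2 + κ ^ 2 * u t ^ 2) := by
        refine intervalIntegral.integral_mono_on hab (hint _ (by fun_prop (disch := assumption)))
          (hint _ (by fun_prop (disch := assumption))) fun t _ => abs_le.2 ⟨?_, ?_⟩
        · nlinarith [sq_nonneg (u' t + κ * u t)]
        · nlinarith [sq_nonneg (u' t - κ * u t)]
    _ = (∫ t in a..b, u' t ^ 2) + κ ^ 2 * ∫ t in a..b, u t ^ 2 := by
        rw [intervalIntegral.integral_add (hint _ (by fun_prop (disch := assumption)))
          (hint _ (by fun_prop (disch := assumption))), intervalIntegral.integral_const_mul]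

theorem integral_mul_mul_le_of_ae_le {q u : ℝ → ℝ} {a b m : ℝ} (hab : a ≤ b)
    (hqu : IntervalIntegrable (fun t => q t * u t * u t) volume a b)
    (hu : ContinuousOn u (Icc a b)) (hq : ∀ᵐ t ∂(volume.restrict (Ioo a b)), q t ≤ m) :
    ∫ t in a..b, q t * u t * u t ≤ m * ∫ t in a..b, u t ^ 2 := by
  rw [← intervalIntegral.integral_const_mul, intervalIntegral.integral_of_le hab,
    intervalIntegral.integral_of_le hab, integral_Ioc_eq_integral_Ioo,
    integral_Ioc_eq_integral_Ioo]
  refine integral_mono_ae (hqu.1.mono_set Ioo_subset_Ioc_self) ?_ ?_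
  · exact ((hu.pow 2).integrableOn_Icc.mono_set Ioo_subset_Icc_self).const_mul m
  · filter_upwards [hq] with t ht
    nlinarith [sq_nonneg (u t)]

theorem sq_le_sq_mul_exp_of_mul_deriv_le {u u' : ℝ → ℝ} {a b κ y : ℝ}
    (hu : ContinuousOn u (Icc a b)) (hderiv : ∀ x ∈ Ioo a b, HasDerivAt u (u' x) x)
    (hdecay : ∀ x ∈ Ioo a b, u x * u' x ≤ -κ * u x ^ 2) (hy : y ∈ Icc a b) :
    u y ^ 2 ≤ u a ^ 2 * Real.exp (-(2 * κ) * (y - a)) := by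
  set g : ℝ → ℝ := fun z => u z ^ 2 * Real.exp (2 * κ * (z - a))
  have hg : AntitoneOn g (Icc a b) := by
    refine antitoneOn_of_hasDerivWithinAt_nonpos (convex_Icc a b)
      (by fun_prop (disch := assumption))
      (f' := fun x => 2 * (u x * u' x + κ * u x ^ 2) * Real.exp (2 * κ * (x - a)))
      (fun x hx => ?_) (fun x hx => ?_) <;> rw [interior_Icc] at hx
    · have hexp : HasDerivAt (fun z => Real.exp (2 * κ * (z - a)))
          (Real.exp (2 * κ * (x - a)) * (2 * κ)) x :=
        (((hasDerivAt_id' x).sub_const a).const_mul (2 * κ)).exp.congr_deriv (by ring)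
      exact (((hderiv x hx).pow 2).mul hexp).hasDerivWithinAt.congr_deriv (by simp; ring)
    · have := hdecay x hx
      exact mul_nonpos_of_nonpos_of_nonneg (by linarith) (Real.exp_pos _).le
  calc u y ^ 2 = g y * Real.exp (-(2 * κ) * (y - a)) := by
        rw [mul_assoc, ← Real.exp_add]; ring_nf; simp
    _ ≤ g a * Real.exp (-(2 * κ) * (y - a)) :=
        mul_le_mul_of_nonneg_right (hg (left_mem_Icc.2 (hy.1.trans hy.2)) hy hy.1)
          (Real.exp_pos _).le
    _ = u a ^ 2 * Real.exp (-(2 * κ) * (y - a)) := by simp [g]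

theorem sq_le_sq_mul_exp_of_mul_le_mul_deriv {u u' : ℝ → ℝ} {a b κ y : ℝ}
    (hu : ContinuousOn u (Icc a b)) (hderiv : ∀ x ∈ Ioo a b, HasDerivAt u (u' x) x)
    (hgrowth : ∀ x ∈ Ioo a b, κ * u x ^ 2 ≤ u x * u' x) (hy : y ∈ Icc a b) :
    u y ^ 2 ≤ u b ^ 2 * Real.exp (-(2 * κ) * (b - y)) := by
  have hmem : ∀ x ∈ Ioo (-b) (-a), -x ∈ Ioo a b :=
    fun x hx => ⟨by linarith [hx.2], by linarith [hx.1]⟩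
  have := sq_le_sq_mul_exp_of_mul_deriv_le (u := fun x => u (-x)) (u' := fun x => -u' (-x))
    (a := -b) (b := -a) (y := -y) (κ := κ)
    (hu.comp continuousOn_neg fun x hx => ⟨by linarith [hx.2], by linarith [hx.1]⟩)
    (fun x hx => ((hderiv (-x) (hmem x hx)).comp x (hasDerivAt_neg' x)).congr_deriv (by ring))
    (fun x hx => by have := hgrowth (-x) (hmem x hx); linarith)
    ⟨by linarith [hy.2], by linarith [hy.1]⟩
  simpa [neg_add_eq_sub] using this

theorem mul_le_mul_exp_of_le_mul_exp {v x₀ A k d δ : ℝ} (hk : 0 ≤ k) (hv₀ : 0 ≤ v)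
    (hv : v ≤ x₀ * Real.exp (-k * d)) (hx₀ : k * x₀ ≤ A) (hδd : δ ≤ d) :
    k * v ≤ A * Real.exp (-k * δ) := by
  have hx₀_nonneg : 0 ≤ x₀ := nonneg_of_mul_nonneg_left (hv₀.trans hv) (Real.exp_pos _)
  calc k * v ≤ k * x₀ * Real.exp (-k * d) := by
        rw [mul_assoc]; exact mul_le_mul_of_nonneg_left hv hk
    _ ≤ A * Real.exp (-k * δ) :=
        mul_le_mul hx₀ (Real.exp_le_exp.2 (by nlinarith)) (Real.exp_pos _).le
          ((mul_nonneg hk hx₀_nonneg).trans hx₀)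

theorem le_div_mul_exp_of_mul_le_mul_exp {x M k ξ d : ℝ} (hx₀ : 0 ≤ x)
    (hx : k * x ≤ M * Real.exp (-k * d)) (hξ : 0 < ξ) (hξk : ξ ≤ k) (hd : 0 ≤ d) :
    x ≤ M / ξ * Real.exp (-ξ * d) := by
  have hk : 0 < k := hξ.trans_le hξk
  have hM : 0 ≤ M :=
    le_of_mul_le_mul_right (by nlinarith : 0 * Real.exp (-k * d) ≤ M * _) (Real.exp_pos _)
  calc x ≤ M / k * Real.exp (-k * d) := by rw [div_mul_eq_mul_div, le_div_iff₀ hk]; linarith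
    _ ≤ M / ξ * Real.exp (-ξ * d) :=
      mul_le_mul (div_le_div_of_nonneg_left hM hξ hξk) (Real.exp_le_exp.2 (by nlinarith))
        (Real.exp_pos _).le (div_nonneg hM hξ.le)

theorem infDist_Ioo_le_of_le {α β y : ℝ} (hαβ : α < β) (hy : y ≤ α) :
    Metric.infDist y (Ioo α β) ≤ α - y := by
  rw [← Metric.infDist_closure, closure_Ioo hαβ.ne]
  refine (Metric.infDist_le_dist_of_mem (left_mem_Icc.2 hαβ.le)).trans_eq ?_
  rw [Real.dist_eq, abs_of_nonpos (by linarith)]; ring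

theorem infDist_Ioo_le_of_ge {α β y : ℝ} (hαβ : α < β) (hy : β ≤ y) :
    Metric.infDist y (Ioo α β) ≤ y - β := by
  rw [← Metric.infDist_closure, closure_Ioo hαβ.ne]
  refine (Metric.infDist_le_dist_of_mem (right_mem_Icc.2 hαβ.le)).trans_eq ?_
  rw [Real.dist_eq, abs_of_nonneg (by linarith)]

theorem integrableOn_inv_of_le {c : ℝ → ℝ} {s : Set ℝ} {m : ℝ} (hc : Measurable c) (hm : 0 < m)
    (hs : MeasurableSet s) (hs' : volume s < ⊤) (hcm : ∀ y ∈ s, m ≤ c y) :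
    IntegrableOn (fun t => (c t)⁻¹) s := by
  refine IntegrableOn.of_bound hs' hc.inv.aestronglyMeasurable m⁻¹ ?_
  filter_upwards [ae_restrict_mem hs] with y hy
  rw [norm_inv, Real.norm_of_nonneg (hm.trans_le (hcm y hy)).le]
  exact inv_anti₀ hm (hcm y hy)

theorem bddAbove_abs_sub_div_mul {c : ℝ → ℝ} {s : Set ℝ} {c₁ m : ℝ} (hc₁ : 0 < c₁) (hm : 0 < m)
    (hcm : ∀ y ∈ s, m ≤ c y) : BddAbove ((fun y => |(c₁ - c y) / (c₁ * c y)|) '' s) := by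
  refine ⟨m⁻¹ + c₁⁻¹, ?_⟩
  rintro _ ⟨y, hy, rfl⟩
  have hcy : 0 < c y := hm.trans_le (hcm y hy)
  change |(c₁ - c y) / (c₁ * c y)| ≤ _
  rw [show (c₁ - c y) / (c₁ * c y) = (c y)⁻¹ - c₁⁻¹ by field_simp]
  refine (abs_sub _ _).trans (add_le_add ?_ (abs_of_pos (inv_pos.2 hc₁)).le)
  rw [abs_of_pos (inv_pos.2 hcy)]
  exact inv_anti₀ hm (hcm y hy)

namespace ReducedEigenfunction

variable {H μ lam : ℝ} {c u u' : ℝ → ℝ}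

theorem continuousOn (hu : ReducedEigenfunction H c μ lam u u') : ContinuousOn u (Icc 0 H) :=
  fun y hy => (hu.1 y hy).continuousWithinAt

theorem hasDerivAt (hu : ReducedEigenfunction H c μ lam u u') {x : ℝ} (hx : x ∈ Ioo 0 H) :
    HasDerivAt u (u' x) x :=
  (hu.1 x (Ioo_subset_Icc_self hx)).hasDerivAt (Icc_mem_nhds hx.1 hx.2)

theorem flux_le {c_m κ m a b : ℝ} (hu : ReducedEigenfunction H c μ lam u u')
    (hmeas : Measurable c) (hcm : 0 < c_m) (hc : ∀ y ∈ Icc 0 H, c_m ≤ c y)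
    (ha : 0 ≤ a) (hab : a ≤ b) (hb : b ≤ H) (hκ : 0 ≤ κ)
    (hq : ∀ᵐ t ∂(volume.restrict (Ioo a b)), lam / c t - μ ^ 2 ≤ m) :
    u a * u' a - u b * u' b + κ * |u b ^ 2 - u a ^ 2| ≤ (m + κ ^ 2) * ∫ t in a..b, u t ^ 2 := by
  have hcont := hu.continuousOn
  obtain ⟨hderiv, hu', heq, -, -, -⟩ := hu
  have hsub : Icc a b ⊆ Icc 0 H := Icc_subset_Icc ha hb
  have hderiv_ab : ∀ x ∈ Icc a b, HasDerivWithinAt u (u' x) (Icc a b) x :=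
    fun x hx => (hderiv x (hsub hx)).mono hsub
  have hq_int : IntegrableOn (fun t => lam / c t - μ ^ 2) (Icc 0 H) := by
    simp_rw [div_eq_mul_inv]
    exact ((integrableOn_inv_of_le hmeas hcm measurableSet_Icc measure_Icc_lt_top hc).const_mul
      lam).sub (integrableOn_const measure_Icc_lt_top.ne)
  have hf := hq_int.mul_continuousOn hcont isCompact_Icc
  have hf_int : ∀ {x y}, 0 ≤ x → x ≤ y → y ≤ H →
      IntervalIntegrable (fun t => (lam / c t - μ ^ 2) * u t) volume x y :=
    fun hx hxy hy => (intervalIntegrable_iff_integrableOn_Icc_of_le hxy).2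
      (hf.mono_set (Icc_subset_Icc hx hy))
  have heq_ab : ∀ y ∈ Icc a b, u' y = u' a - ∫ t in a..y, (lam / c t - μ ^ 2) * u t := by
    intro y hy
    rw [heq y (hsub hy), heq a (hsub (left_mem_Icc.2 hab)),
      ← intervalIntegral.integral_interval_sub_left
        (hf_int le_rfl (ha.trans hy.1) (hy.2.trans hb)) (hf_int le_rfl ha (hab.trans hb))]
    ring
  have henergy := integral_mul_eq_of_eq_sub_integral hab hderiv_ab (hu'.mono hsub)
    (hf_int ha hab hb) heq_ab
  have hamgm := mul_abs_sq_sub_sq_le_integral hab hderiv_ab (hu'.mono hsub) hκ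
  have hsign := integral_mul_mul_le_of_ae_le hab
    ((intervalIntegrable_iff_integrableOn_Icc_of_le hab).2
      ((hf.mul_continuousOn hcont isCompact_Icc).mono_set hsub))
    (hcont.mono hsub) hq
  rw [add_mul]
  linarith

theorem mul_deriv_le_of_ae_le {c_m κ x : ℝ} (hu : ReducedEigenfunction H c μ lam u u')
    (hmeas : Measurable c) (hcm : 0 < c_m) (hc : ∀ y ∈ Icc 0 H, c_m ≤ c y) (hκ : 0 ≤ κ)
    (hx : x ∈ Icc 0 H) (hq : ∀ᵐ t ∂(volume.restrict (Ioo x H)), lam / c t - μ ^ 2 ≤ -κ ^ 2) :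
    u x * u' x ≤ -κ * u x ^ 2 := by
  have := hu.flux_le hmeas hcm hc hx.1 hx.2 le_rfl hκ hq
  rw [hu.2.2.2.2.2, neg_add_cancel, zero_mul, zero_pow two_ne_zero, zero_sub, abs_neg,
    abs_of_nonneg (sq_nonneg _)] at this
  linarith

theorem mul_le_mul_deriv_of_ae_le {c_m κ x : ℝ} (hu : ReducedEigenfunction H c μ lam u u')
    (hmeas : Measurable c) (hcm : 0 < c_m) (hc : ∀ y ∈ Icc 0 H, c_m ≤ c y) (hκ : 0 ≤ κ)
    (hx : x ∈ Icc 0 H) (hq : ∀ᵐ t ∂(volume.restrict (Ioo 0 x)), lam / c t - μ ^ 2 ≤ -κ ^ 2) :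
    κ * u x ^ 2 ≤ u x * u' x := by
  have := hu.flux_le hmeas hcm hc le_rfl hx.1 hx.2 hκ hq
  rw [hu.2.2.2.2.1, neg_add_cancel, zero_mul, zero_pow two_ne_zero, sub_zero,
    abs_of_nonneg (sq_nonneg _)] at this
  linarith

theorem two_mul_sq_le_mul_exp_infDist {c_m κ M α β y : ℝ}
    (hu : ReducedEigenfunction H c μ lam u u') (hmeas : Measurable c) (hcm : 0 < c_m)
    (hc : ∀ y ∈ Icc 0 H, c_m ≤ c y) (hκ : 0 ≤ κ) (hα : 0 ≤ α) (hαβ : α < β) (hβ : β ≤ H)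
    (hout : ∀ᵐ t ∂(volume.restrict (Ioo 0 H \ Ioo α β)), lam / c t - μ ^ 2 ≤ -κ ^ 2)
    (hin : ∀ᵐ t ∂(volume.restrict (Ioo α β)), lam / c t - μ ^ 2 ≤ M - κ ^ 2)
    (hy : y ∈ Icc 0 H \ Ioo α β) :
    2 * κ * u y ^ 2 ≤
      M * (∫ z in α..β, u z ^ 2) * Real.exp (-(2 * κ) * Metric.infDist y (Ioo α β)) := by
  have hright : ∀ x ∈ Icc β H, u x * u' x ≤ -κ * u x ^ 2 := fun x (hx : x ∈ Icc β H) =>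
    hu.mul_deriv_le_of_ae_le hmeas hcm hc hκ ⟨by linarith [hx.1], hx.2⟩
      (ae_restrict_of_ae_restrict_of_subset (s := Ioo x H) (t := Ioo 0 H \ Ioo α β)
        (fun t ht => ⟨⟨by linarith [ht.1, hx.1], ht.2⟩, fun h => by linarith [h.2, ht.1, hx.1]⟩)
        hout)
  have hleft : ∀ x ∈ Icc 0 α, κ * u x ^ 2 ≤ u x * u' x := fun x (hx : x ∈ Icc 0 α) =>
    hu.mul_le_mul_deriv_of_ae_le hmeas hcm hc hκ ⟨hx.1, by linarith [hx.2]⟩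
      (ae_restrict_of_ae_restrict_of_subset (s := Ioo 0 x) (t := Ioo 0 H \ Ioo α β)
        (fun t ht => ⟨⟨ht.1, by linarith [ht.2, hx.2]⟩, fun h => by linarith [h.1, ht.2, hx.2]⟩)
        hout)
  have hflux := hu.flux_le hmeas hcm hc hα hαβ.le hβ hκ hin
  rw [sub_add_cancel] at hflux
  have hαβ_bound : 2 * κ * u α ^ 2 ≤ M * ∫ z in α..β, u z ^ 2 ∧
      2 * κ * u β ^ 2 ≤ M * ∫ z in α..β, u z ^ 2 := by
    have := hright β ⟨le_rfl, hβ⟩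
    have := hleft α ⟨hα, le_rfl⟩
    constructor <;> nlinarith [neg_abs_le (u β ^ 2 - u α ^ 2), le_abs_self (u β ^ 2 - u α ^ 2)]
  rcases le_or_gt y α with hyα | hyα
  · have hdecay := sq_le_sq_mul_exp_of_mul_le_mul_deriv
      (hu.continuousOn.mono (Icc_subset_Icc le_rfl (hαβ.le.trans hβ)))
      (fun x hx => hu.hasDerivAt ⟨hx.1, by linarith [hx.2]⟩)
      (fun x hx => hleft x (Ioo_subset_Icc_self hx)) ⟨hy.1.1, hyα⟩
    exact mul_le_mul_exp_of_le_mul_exp (by positivity) (sq_nonneg _) hdecay hαβ_bound.1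
      (infDist_Ioo_le_of_le hαβ hyα)
  · have hyβ : β ≤ y := not_lt.1 fun h => hy.2 ⟨hyα, h⟩
    have hdecay := sq_le_sq_mul_exp_of_mul_deriv_le
      (hu.continuousOn.mono (Icc_subset_Icc (hα.trans hαβ.le) le_rfl))
      (fun x hx => hu.hasDerivAt ⟨by linarith [hx.1], hx.2⟩)
      (fun x hx => hright x (Ioo_subset_Icc_self hx)) ⟨hyβ, hy.1.2⟩
    exact mul_le_mul_exp_of_le_mul_exp (by positivity) (sq_nonneg _) hdecay hαβ_bound.2
      (infDist_Ioo_le_of_ge hαβ hyβ)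

end ReducedEigenfunction

theorem stmt0_general
    (H c_m c_M c₁ α β μ lam : ℝ) (c u u' : ℝ → ℝ)
    (hcm : 0 < c_m)
    (hmeas : Measurable c)
    (hbounds : ∀ y ∈ Set.Icc (0:ℝ) H, c_m ≤ c y ∧ c y ≤ c_M)
    (hc₁m : c_m < c₁)
    (hα : 0 ≤ α) (hαβ : α < β) (hβ : β ≤ H)
    (hwell : ∀ᵐ y ∂(MeasureTheory.volume.restrict (Set.Ioo (0:ℝ) H \ Set.Ioo α β)),
      c₁ ≤ c y)
    (hlam₁ : c_m * μ ^ 2 ≤ lam) (hlam₂ : lam < c₁ * μ ^ 2)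
    (hu : ReducedEigenfunction H c μ lam u u') :
    ∀ y ∈ Set.Icc (0:ℝ) H \ Set.Ioo α β,
      (u y) ^ 2 ≤
        (sSup ((fun y' => |(c₁ - c y') / (c₁ * c y')|) '' Set.Ioo α β)) *
          (lam / Real.sqrt (2 * (μ ^ 2 - lam / c₁))) *
          Real.exp (-(Real.sqrt (2 * (μ ^ 2 - lam / c₁))) * Metric.infDist y (Set.Ioo α β)) *
          ∫ z in α..β, (u z) ^ 2 := by
  intro y hy
  have hc₁ : 0 < c₁ := hcm.trans hc₁m
  have hlam : 0 ≤ lam := (by positivity : 0 ≤ c_m * μ ^ 2).trans hlam₁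
  have hgap : 0 < μ ^ 2 - lam / c₁ := by rw [sub_pos, div_lt_iff₀ hc₁]; linarith
  have hc : ∀ y ∈ Icc 0 H, c_m ≤ c y := fun y hy => (hbounds y hy).1
  have hwell_sub : Ioo α β ⊆ Icc 0 H := fun t ht => ⟨hα.trans ht.1.le, ht.2.le.trans hβ⟩
  set κ := Real.sqrt (μ ^ 2 - lam / c₁)
  have hκsq : κ ^ 2 = μ ^ 2 - lam / c₁ := Real.sq_sqrt hgap.le
  set ξ := Real.sqrt (2 * (μ ^ 2 - lam / c₁))
  have hξκ : ξ ≤ 2 * κ := Real.sqrt_le_iff.2 ⟨by positivity, by nlinarith⟩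
  set S := sSup ((fun y' => |(c₁ - c y') / (c₁ * c y')|) '' Ioo α β)
  have hin : ∀ t ∈ Ioo α β, lam / c t - μ ^ 2 ≤ lam * S - κ ^ 2 := by
    intro t ht
    have hct : 0 < c t := hcm.trans_le (hc t (hwell_sub ht))
    have hSt := le_csSup (bddAbove_abs_sub_div_mul hc₁ hcm fun t ht => hc t (hwell_sub ht))
      (mem_image_of_mem _ ht)
    have h := mul_le_mul_of_nonneg_left ((le_abs_self _).trans hSt) hlam
    rw [show lam * ((c₁ - c t) / (c₁ * c t)) = lam / c t - lam / c₁ by field_simp] at h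
    linarith
  have hout : ∀ᵐ t ∂(volume.restrict (Ioo 0 H \ Ioo α β)), lam / c t - μ ^ 2 ≤ -κ ^ 2 := by
    filter_upwards [hwell] with t ht
    linarith [div_le_div_of_nonneg_left hlam hc₁ ht]
  have hdecay := hu.two_mul_sq_le_mul_exp_infDist hmeas hcm hc (Real.sqrt_nonneg _) hα hαβ hβ
    hout (ae_restrict_of_forall_mem measurableSet_Ioo hin) hy
  exact (le_div_mul_exp_of_mul_le_mul_exp (sq_nonneg _) hdecay (Real.sqrt_pos.2 (by positivity))
    hξκ Metric.infDist_nonneg).trans_eq (by ring)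

theorem stmt0
    (H c_m c_M c₁ α β μ lam : ℝ) (c u u' : ℝ → ℝ)
    (hH : 0 < H) (hcm : 0 < c_m) (hcmM : c_m ≤ c_M)
    (hmeas : Measurable c)
    (hbounds : ∀ y ∈ Set.Icc (0:ℝ) H, c_m ≤ c y ∧ c y ≤ c_M)
    (hc₁m : c_m < c₁) (hc₁M : c₁ ≤ c_M)
    (hα : 0 ≤ α) (hαβ : α < β) (hβ : β ≤ H)
    (hwell : ∀ᵐ y ∂(MeasureTheory.volume.restrict (Set.Ioo (0:ℝ) H \ Set.Ioo α β)),
      c₁ ≤ c y)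
    (hμ : 0 < μ)
    (hlam₁ : c_m * μ ^ 2 ≤ lam) (hlam₂ : lam < c₁ * μ ^ 2)
    (hu : ReducedEigenfunction H c μ lam u u') :
    ∀ y ∈ Set.Icc (0:ℝ) H \ Set.Ioo α β,
      (u y) ^ 2 ≤
        (sSup ((fun y' => |(c₁ - c y') / (c₁ * c y')|) '' Set.Ioo α β)) *
          (lam / Real.sqrt (2 * (μ ^ 2 - lam / c₁))) *
          Real.exp (-(Real.sqrt (2 * (μ ^ 2 - lam / c₁))) * Metric.infDist y (Set.Ioo α β)) *
          ∫ z in α..β, (u z) ^ 2 :=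
  stmt0_general H c_m c_M c₁ α β μ lam c u u' hcm hmeas hbounds hc₁m hα hαβ hβ hwell hlam₁ hlam₂ hu
end

section
/- Let H > 0 and let q : [0,H] → ℝ be measurable and essentially bounded with q(y) > 1 for almost every y ∈ [0,H]. Let u : [0,H] → ℝ be continuously differentiable, not identically zero, with u'(y) = u'(0) − ∫₀ʸ q(t) u(t) dt for all y ∈ [0,H], and u(0) = u(H) = 0. If z < z' are zeros of u with u(y) ≠ 0 for all y ∈ (z, z'), and y* ∈ (z, z') satisfies u'(y*) = 0, then min( u'(z)², u'(z')² ) ≥ u(y*)². -/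
open Set MeasureTheory Filter

lemma fubini_self (g : ℝ → ℝ) (a b : ℝ)
    (hg : MeasureTheory.IntegrableOn g (Set.Ioc a b)) :
    ∫ t in Set.Ioc a b, (∫ s in Set.Ioc a t, g s) * g t
      = (∫ s in Set.Ioc a b, g s) ^ 2 / 2 := by
  set ρ : Measure ℝ := volume.restrict (Set.Ioc a b) with hρ
  have hgρ : Integrable g ρ := hg
  have hF : Integrable (fun p : ℝ × ℝ => g p.1 * g p.2) (ρ.prod ρ) := hgρ.mul_prod hgρ
  have hS : MeasurableSet {p : ℝ × ℝ | p.1 ≤ p.2} :=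
    measurableSet_le measurable_fst measurable_snd
  -- part 1 : integral over S
  have h1 : ∫ p in {p : ℝ × ℝ | p.1 ≤ p.2}, g p.1 * g p.2 ∂(ρ.prod ρ)
      = ∫ t in Set.Ioc a b, (∫ s in Set.Ioc a t, g s) * g t := by
    rw [← integral_indicator hS]
    rw [integral_prod_symm _ (hF.indicator hS)]
    rw [hρ]
    apply setIntegral_congr_fun measurableSet_Ioc
    intro t ht
    beta_reduce
    have : (fun s => Set.indicator {p : ℝ × ℝ | p.1 ≤ p.2} (fun p : ℝ × ℝ => g p.1 * g p.2) (s, t))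
        = Set.indicator (Set.Iic t) (fun s => g s * g t) := by
      ext s
      by_cases h : s ≤ t <;>
        simp [Set.indicator_apply, h, Set.mem_setOf_eq]
    rw [this, integral_indicator measurableSet_Iic]
    rw [Measure.restrict_restrict measurableSet_Iic]
    have : Set.Iic t ∩ Set.Ioc a b = Set.Ioc a t := by
      ext s; simp only [Set.mem_inter_iff, Set.mem_Iic, Set.mem_Ioc]
      constructor
      · rintro ⟨h1, h2, h3⟩; exact ⟨h2, h1⟩
      · rintro ⟨h1, h2⟩; exact ⟨h2, h1, h2.trans ht.2⟩
    rw [this, integral_mul_const]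
  -- part 2 : integral over complement
  have h2 : ∫ p in {p : ℝ × ℝ | p.1 ≤ p.2}ᶜ, g p.1 * g p.2 ∂(ρ.prod ρ)
      = ∫ t in Set.Ioc a b, (∫ s in Set.Ioc a t, g s) * g t := by
    rw [← integral_indicator hS.compl]
    rw [integral_prod _ (hF.indicator hS.compl)]
    rw [hρ]
    apply setIntegral_congr_fun measurableSet_Ioc
    intro s hs
    have : (fun t => Set.indicator {p : ℝ × ℝ | p.1 ≤ p.2}ᶜ (fun p : ℝ × ℝ => g p.1 * g p.2) (s, t))
        = Set.indicator (Set.Iio s) (fun t => g s * g t) := by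
      ext t
      by_cases h : t < s <;>
        simp [Set.indicator_apply, h, Set.mem_setOf_eq, not_le, not_lt]
    beta_reduce
    rw [this, integral_indicator measurableSet_Iio]
    rw [Measure.restrict_restrict measurableSet_Iio]
    have : Set.Iio s ∩ Set.Ioc a b = Set.Ioo a s := by
      ext t; simp only [Set.mem_inter_iff, Set.mem_Iio, Set.mem_Ioc, Set.mem_Ioo]
      constructor
      · rintro ⟨h1, h2, h3⟩; exact ⟨h2, h1⟩
      · rintro ⟨h1, h2⟩; exact ⟨h2, h1, (le_of_lt h2).trans hs.2⟩
    rw [this, ← integral_Ioc_eq_integral_Ioo, integral_const_mul, mul_comm]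
  have h3 := integral_add_compl hS hF
  have h4 : ∫ p : ℝ × ℝ, g p.1 * g p.2 ∂(ρ.prod ρ)
      = (∫ s in Set.Ioc a b, g s) * (∫ s in Set.Ioc a b, g s) := integral_prod_mul g g
  rw [h1, h2, h4] at h3
  linarith [h3]


lemma energy (g u u' : ℝ → ℝ) (a b : ℝ) (hab : a ≤ b)
    (hg : IntervalIntegrable g volume a b)
    (hu_c : ContinuousOn u (Set.Icc a b))
    (hu'_c : ContinuousOn u' (Set.Icc a b))
    (hud : ∀ x ∈ Set.Ioo a b, HasDerivAt u (u' x) x)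
    (heq' : ∀ y ∈ Set.Icc a b, u' y = u' a - ∫ t in a..y, g t) :
    (u' b) ^ 2 + (u b) ^ 2 - ((u' a) ^ 2 + (u a) ^ 2)
      = 2 * ∫ t in a..b, (u t - g t) * u' t := by
  have huIcc : Set.uIcc a b = Set.Icc a b := Set.uIcc_of_le hab
  set G : ℝ → ℝ := fun y => ∫ t in a..y, g t with hG
  -- continuity of G on [a,b]
  have hGc : ContinuousOn G (Set.Icc a b) := by
    rw [← huIcc]
    exact intervalIntegral.continuousOn_primitive_interval
      (by rw [huIcc, integrableOn_Icc_iff_integrableOn_Ioc]; exact hg.1)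
  -- integrabilities
  have huu' : IntervalIntegrable (fun t => u t * u' t) volume a b :=
    ((hu_c.mul hu'_c).mono (by rw [huIcc])).intervalIntegrable
  have hgu' : IntervalIntegrable (fun t => g t * u' t) volume a b :=
    hg.mul_continuousOn (by rw [huIcc]; exact hu'_c)
  have hGg : IntervalIntegrable (fun t => G t * g t) volume a b :=
    hg.continuousOn_mul (by rw [huIcc]; exact hGc)
  -- FTC for u^2
  have ftc1 : ∫ t in a..b, 2 * u t * u' t = u b ^ 2 - u a ^ 2 := by
    apply intervalIntegral.integral_eq_sub_of_hasDeriv_right_of_le hab (hu_c.pow 2)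
    · intro x hx
      have := ((hud x hx).pow 2).hasDerivWithinAt (s := Set.Ioi x)
      simpa using this
    · have : IntervalIntegrable (fun t => u t * u' t) volume a b := huu'
      simpa [mul_assoc] using this.const_mul 2
  -- key: ∫ G g over Ioc
  have key0 : ∫ t in a..b, G t * g t = (G b) ^ 2 / 2 := by
    rw [intervalIntegral.integral_of_le hab]
    have : ∀ t ∈ Set.Ioc a b, G t * g t = (∫ s in Set.Ioc a t, g s) * g t := by
      intro t ht
      rw [hG]
      beta_reduce
      rw [intervalIntegral.integral_of_le ht.1.le]
    rw [setIntegral_congr_fun measurableSet_Ioc this, fubini_self g a b hg.1, hG]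
    beta_reduce
    rw [intervalIntegral.integral_of_le hab]
  -- compute ∫ u' g
  have key2 : ∫ t in a..b, u' t * g t = u' a * G b - (G b) ^ 2 / 2 := by
    have hcg : ∀ t ∈ Set.uIcc a b, u' t * g t = u' a * g t - G t * g t := by
      intro t ht
      rw [huIcc] at ht
      rw [heq' t ht]; ring
    rw [intervalIntegral.integral_congr hcg,
      intervalIntegral.integral_sub (hg.const_mul _) hGg,
      intervalIntegral.integral_const_mul, key0]
  -- put things together
  have hub : u' b = u' a - G b := heq' b ⟨hab, le_refl b⟩
  have hsplit : ∫ t in a..b, (u t - g t) * u' t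
      = (∫ t in a..b, u t * u' t) - ∫ t in a..b, u' t * g t := by
    have : ∀ t ∈ Set.uIcc a b, (u t - g t) * u' t = u t * u' t - u' t * g t := by
      intro t _; ring
    rw [intervalIntegral.integral_congr this,
      intervalIntegral.integral_sub huu' (by simpa [mul_comm] using hgu')]
  have h2uu' : ∫ t in a..b, u t * u' t = (u b ^ 2 - u a ^ 2) / 2 := by
    have h2 : (2:ℝ) * ∫ t in a..b, u t * u' t = u b ^ 2 - u a ^ 2 := by
      rw [← intervalIntegral.integral_const_mul, ← ftc1]
      apply intervalIntegral.integral_congr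
      intro t _; ring
    linarith
  rw [hsplit, key2, h2uu', hub]
  ring


lemma keyA (g u u' : ℝ → ℝ) (a b : ℝ) (hab : a ≤ b)
    (hg : IntervalIntegrable g volume a b)
    (hu_c : ContinuousOn u (Set.Icc a b))
    (hu'_c : ContinuousOn u' (Set.Icc a b))
    (hud : ∀ x ∈ Set.Ioo a b, HasDerivAt u (u' x) x)
    (heq' : ∀ y ∈ Set.Icc a b, u' y = u' a - ∫ t in a..y, g t)
    (hae : ∀ᵐ t ∂(volume.restrict (Set.Ioc a b)), 0 ≤ u t ∧ u t ≤ g t)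
    (hub : u' b = 0) (hua : u a = 0) :
    u b ^ 2 ≤ u' a ^ 2 := by
  have hE := energy g u u' a b hab hg hu_c hu'_c hud heq'
  have hg0 : ∀ᵐ t ∂(volume.restrict (Set.Ioc a b)), 0 ≤ g t :=
    hae.mono fun t h => h.1.trans h.2
  have hu'pos : ∀ t ∈ Set.Icc a b, 0 ≤ u' t := by
    intro t ht
    have h1 := heq' t ht
    have h2 := heq' b ⟨hab, le_refl b⟩
    rw [hub] at h2
    have htm : t ∈ Set.uIcc a b := by rw [Set.uIcc_of_le hab]; exact ht
    have hg1 : IntervalIntegrable g volume a t :=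
      hg.mono_set (Set.uIcc_subset_uIcc Set.left_mem_uIcc htm)
    have hg2 : IntervalIntegrable g volume t b :=
      hg.mono_set (Set.uIcc_subset_uIcc htm Set.right_mem_uIcc)
    have hsplit : (∫ s in a..t, g s) + ∫ s in t..b, g s = ∫ s in a..b, g s :=
      intervalIntegral.integral_add_adjacent_intervals hg1 hg2
    have hpos : 0 ≤ ∫ s in t..b, g s := by
      apply intervalIntegral.integral_nonneg_of_ae_restrict ht.2
      rw [← Measure.restrict_congr_set Ioc_ae_eq_Icc]
      exact ae_restrict_of_ae_restrict_of_subset (Set.Ioc_subset_Ioc_left ht.1) hg0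
    linarith
  have hint : ∫ t in a..b, (u t - g t) * u' t ≤ 0 := by
    rw [intervalIntegral.integral_of_le hab]
    apply integral_nonpos_of_ae
    have h1 : ∀ᵐ t ∂(volume.restrict (Set.Ioc a b)), 0 ≤ u' t :=
      ae_restrict_of_forall_mem measurableSet_Ioc fun t ht =>
        hu'pos t (Set.Ioc_subset_Icc_self ht)
    filter_upwards [hae, h1] with t ht h1t
    have h0 : (u t - g t) * u' t ≤ (0:ℝ) :=
      mul_nonpos_of_nonpos_of_nonneg (sub_nonpos.2 ht.2) h1t
    exact h0
  rw [hub, hua] at hE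
  nlinarith [hE, hint]

lemma keyB (g u u' : ℝ → ℝ) (a b : ℝ) (hab : a ≤ b)
    (hg : IntervalIntegrable g volume a b)
    (hu_c : ContinuousOn u (Set.Icc a b))
    (hu'_c : ContinuousOn u' (Set.Icc a b))
    (hud : ∀ x ∈ Set.Ioo a b, HasDerivAt u (u' x) x)
    (heq' : ∀ y ∈ Set.Icc a b, u' y = u' a - ∫ t in a..y, g t)
    (hae : ∀ᵐ t ∂(volume.restrict (Set.Ioc a b)), 0 ≤ u t ∧ u t ≤ g t)
    (hua : u' a = 0) (hub : u b = 0) :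
    u a ^ 2 ≤ u' b ^ 2 := by
  have hE := energy g u u' a b hab hg hu_c hu'_c hud heq'
  have hg0 : ∀ᵐ t ∂(volume.restrict (Set.Ioc a b)), 0 ≤ g t :=
    hae.mono fun t h => h.1.trans h.2
  have hu'neg : ∀ t ∈ Set.Icc a b, u' t ≤ 0 := by
    intro t ht
    have h1 := heq' t ht
    rw [hua] at h1
    have hpos : 0 ≤ ∫ s in a..t, g s := by
      apply intervalIntegral.integral_nonneg_of_ae_restrict ht.1
      rw [← Measure.restrict_congr_set Ioc_ae_eq_Icc]
      exact ae_restrict_of_ae_restrict_of_subset (Set.Ioc_subset_Ioc_right ht.2) hg0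
    linarith
  have hint : 0 ≤ ∫ t in a..b, (u t - g t) * u' t := by
    rw [intervalIntegral.integral_of_le hab]
    apply integral_nonneg_of_ae
    have h1 : ∀ᵐ t ∂(volume.restrict (Set.Ioc a b)), u' t ≤ 0 :=
      ae_restrict_of_forall_mem measurableSet_Ioc fun t ht =>
        hu'neg t (Set.Ioc_subset_Icc_self ht)
    filter_upwards [hae, h1] with t ht h1t
    have h0 : (0:ℝ) ≤ (u t - g t) * u' t := by nlinarith [ht.2, h1t]
    exact h0
  rw [hua, hub] at hE
  nlinarith [hE, hint]


theorem stmt7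
    (H : ℝ) (hH : 0 < H) (q u u' : ℝ → ℝ) (z z' ystar : ℝ)
    (hqmeas : Measurable q)
    (hqbdd : ∃ C : ℝ, ∀ᵐ y ∂(MeasureTheory.volume.restrict (Set.Icc (0:ℝ) H)), |q y| ≤ C)
    (hq1 : ∀ᵐ y ∂(MeasureTheory.volume.restrict (Set.Icc (0:ℝ) H)), 1 < q y)
    (hderiv : ∀ y ∈ Set.Icc (0:ℝ) H, HasDerivWithinAt u (u' y) (Set.Icc (0:ℝ) H) y)
    (hcont : ContinuousOn u' (Set.Icc (0:ℝ) H))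
    (heq : ∀ y ∈ Set.Icc (0:ℝ) H, u' y = u' 0 - ∫ t in (0:ℝ)..y, q t * u t)
    (hnontriv : ∃ y ∈ Set.Icc (0:ℝ) H, u y ≠ 0)
    (hu0 : u 0 = 0) (huH : u H = 0)
    (hz : z ∈ Set.Icc (0:ℝ) H) (hz' : z' ∈ Set.Icc (0:ℝ) H) (hzz' : z < z')
    (huz : u z = 0) (huz' : u z' = 0)
    (hne : ∀ y ∈ Set.Ioo z z', u y ≠ 0)
    (hystar : ystar ∈ Set.Ioo z z') (hcrit : u' ystar = 0) :
    (u ystar) ^ 2 ≤ min ((u' z) ^ 2) ((u' z') ^ 2) := by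
  set g : ℝ → ℝ := fun t => q t * u t with hgdef
  have hzy : z < ystar := hystar.1
  have hyz' : ystar < z' := hystar.2
  -- basic membership facts
  have hIoosub : Set.Ioo z z' ⊆ Set.Icc 0 H :=
    fun x hx => ⟨hz.1.trans hx.1.le, hx.2.le.trans hz'.2⟩
  have hystarH : ystar ∈ Set.Icc (0:ℝ) H := hIoosub hystar
  -- continuity of u on [0, H]
  have hu_cont : ContinuousOn u (Set.Icc (0:ℝ) H) :=
    fun x hx => (hderiv x hx).continuousWithinAt
  -- integrability of g on [0, H]
  have hgI : IntegrableOn g (Set.Icc (0:ℝ) H) volume := by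
    obtain ⟨C, hC⟩ := hqbdd
    obtain ⟨M, hM⟩ := isCompact_Icc.exists_bound_of_continuousOn hu_cont
    have hsm : AEStronglyMeasurable g (volume.restrict (Set.Icc (0:ℝ) H)) :=
      (hqmeas.aemeasurable.mul (hu_cont.aemeasurable measurableSet_Icc)).aestronglyMeasurable
    apply Integrable.mono' (integrable_const (C * M)) hsm
    filter_upwards [hC,
      ae_restrict_of_forall_mem (μ := volume) measurableSet_Icc hM] with t h1 h2
    have hC0 : 0 ≤ C := (abs_nonneg _).trans h1
    calc ‖g t‖ = |q t| * ‖u t‖ := by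
          rw [hgdef]; beta_reduce; rw [Real.norm_eq_abs, abs_mul, Real.norm_eq_abs]
      _ ≤ C * M := mul_le_mul h1 h2 (norm_nonneg _) hC0
  have hgint : ∀ x ∈ Set.Icc (0:ℝ) H, ∀ y ∈ Set.Icc (0:ℝ) H,
      IntervalIntegrable g volume x y := by
    intro x hx y hy
    apply MeasureTheory.IntegrableOn.intervalIntegrable
    apply hgI.mono_set
    rw [← Set.uIcc_of_le hH.le]
    exact Set.uIcc_subset_uIcc ((Set.uIcc_of_le hH.le).symm ▸ hx)
      ((Set.uIcc_of_le hH.le).symm ▸ hy)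
  -- the integral equation between any two points
  have hsub : ∀ x ∈ Set.Icc (0:ℝ) H, ∀ y ∈ Set.Icc (0:ℝ) H,
      u' y = u' x - ∫ t in x..y, g t := by
    intro x hx y hy
    have h0H : (0:ℝ) ∈ Set.Icc (0:ℝ) H := ⟨le_refl 0, hH.le⟩
    have hdiff := intervalIntegral.integral_interval_sub_left
      (hgint 0 h0H y hy) (hgint 0 h0H x hx)
    have e1 := heq y hy
    have e2 := heq x hx
    rw [hgdef] at e1 e2 ⊢
    linarith [hdiff, e1, e2]
  -- derivatives in the interior
  have hudAt : ∀ x ∈ Set.Ioo z z', HasDerivAt u (u' x) x := by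
    intro x hx
    exact (hderiv x (hIoosub hx)).hasDerivAt
      (Icc_mem_nhds (lt_of_le_of_lt hz.1 hx.1) (lt_of_lt_of_le hx.2 hz'.2))
  -- a.e. fact on subintervals
  have hq1' : ∀ s : Set ℝ, s ⊆ Set.Icc (0:ℝ) H →
      (∀ᵐ t ∂(volume.restrict s), 1 < q t) := by
    intro s hs
    exact ae_restrict_of_ae_restrict_of_subset hs hq1
  -- sign dichotomy
  rcases lt_or_gt_of_ne (hne ystar hystar) with hneg | hpos
  · -- u < 0 on (z, z')
    have hsgn : ∀ y ∈ Set.Ioo z z', u y < 0 := by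
      intro y hy
      rcases lt_or_gt_of_ne (hne y hy) with h | h
      · exact h
      · exfalso
        have hsubI : Set.uIcc y ystar ⊆ Set.Ioo z z' :=
          (Set.ordConnected_Ioo).uIcc_subset hy hystar
        have hctsI : ContinuousOn u (Set.uIcc y ystar) :=
          hu_cont.mono (hsubI.trans hIoosub)
        have h0 : (0:ℝ) ∈ Set.uIcc (u y) (u ystar) :=
          Set.mem_uIcc.2 (Or.inr ⟨hneg.le, h.le⟩)
        obtain ⟨c, hc, hc0⟩ := intermediate_value_uIcc hctsI h0
        exact hne c (hsubI hc) hc0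
    -- apply keys to -u, -u', -g
    have hud' : ∀ x ∈ Set.Ioo z z', HasDerivAt (fun t => -u t) (-u' x) x :=
      fun x hx => (hudAt x hx).neg
    have heqneg : ∀ x ∈ Set.Icc (0:ℝ) H, ∀ y ∈ Set.Icc (0:ℝ) H,
        (fun t => -u' t) y = (fun t => -u' t) x - ∫ t in x..y, (fun s => -g s) t := by
      intro x hx y hy
      have := hsub x hx y hy
      beta_reduce
      rw [intervalIntegral.integral_neg]
      linarith [this]
    have hA : ((fun t => -u t) ystar) ^ 2 ≤ ((fun t => -u' t) z) ^ 2 := by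
      apply keyA (fun s => -g s) (fun t => -u t) (fun t => -u' t) z ystar hzy.le
      · exact (hgint z hz ystar hystarH).neg
      · exact (hu_cont.mono (Set.Icc_subset_Icc hz.1 hystarH.2)).neg
      · exact (hcont.mono (Set.Icc_subset_Icc hz.1 hystarH.2)).neg
      · intro x hx
        exact hud' x ⟨hx.1, hx.2.trans hyz'⟩
      · intro y hy
        exact heqneg z hz y ⟨hz.1.trans hy.1, hy.2.trans hystarH.2⟩
      · filter_upwards [hq1' (Set.Ioc z ystar)
          (fun t ht => hIoosub ⟨ht.1, ht.2.trans_lt hyz'⟩),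
          ae_restrict_of_forall_mem (μ := volume) measurableSet_Ioc
            (fun t (ht : t ∈ Set.Ioc z ystar) => hsgn t ⟨ht.1, ht.2.trans_lt hyz'⟩)]
          with t h1 h2
        constructor
        · linarith [h2]
        · rw [hgdef]; beta_reduce; nlinarith [h1, h2]
      · beta_reduce; rw [hcrit]; ring
      · beta_reduce; rw [huz]; ring
    have hB : ((fun t => -u t) ystar) ^ 2 ≤ ((fun t => -u' t) z') ^ 2 := by
      apply keyB (fun s => -g s) (fun t => -u t) (fun t => -u' t) ystar z' hyz'.le
      · exact (hgint ystar hystarH z' hz').neg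
      · exact (hu_cont.mono (Set.Icc_subset_Icc hystarH.1 hz'.2)).neg
      · exact (hcont.mono (Set.Icc_subset_Icc hystarH.1 hz'.2)).neg
      · intro x hx
        exact hud' x ⟨hzy.trans hx.1, hx.2⟩
      · intro y hy
        exact heqneg ystar hystarH y ⟨hystarH.1.trans hy.1, hy.2.trans hz'.2⟩
      · have hnn : ∀ t ∈ Set.Ioc ystar z', u t ≤ 0 := by
          intro t ht
          rcases eq_or_lt_of_le ht.2 with h | h
          · rw [h, huz']
          · exact (hsgn t ⟨hzy.trans ht.1, h⟩).le
        filter_upwards [hq1' (Set.Ioc ystar z')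
          (fun t ht => ⟨hystarH.1.trans ht.1.le, ht.2.trans hz'.2⟩),
          ae_restrict_of_forall_mem (μ := volume) measurableSet_Ioc hnn] with t h1 h2
        constructor
        · linarith [h2]
        · rw [hgdef]; beta_reduce; nlinarith [h1, h2]
      · beta_reduce; rw [hcrit]; ring
      · beta_reduce; rw [huz']; ring
    simp only [neg_sq] at hA hB
    exact le_min hA hB
  · -- u > 0 on (z, z')
    have hsgn : ∀ y ∈ Set.Ioo z z', 0 < u y := by
      intro y hy
      rcases lt_or_gt_of_ne (hne y hy) with h | h
      · exfalso
        have hsubI : Set.uIcc y ystar ⊆ Set.Ioo z z' :=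
          (Set.ordConnected_Ioo).uIcc_subset hy hystar
        have hctsI : ContinuousOn u (Set.uIcc y ystar) :=
          hu_cont.mono (hsubI.trans hIoosub)
        have h0 : (0:ℝ) ∈ Set.uIcc (u y) (u ystar) :=
          Set.mem_uIcc.2 (Or.inl ⟨h.le, hpos.le⟩)
        obtain ⟨c, hc, hc0⟩ := intermediate_value_uIcc hctsI h0
        exact hne c (hsubI hc) hc0
      · exact h
    have hA : (u ystar) ^ 2 ≤ (u' z) ^ 2 := by
      apply keyA g u u' z ystar hzy.le
      · exact hgint z hz ystar hystarH
      · exact hu_cont.mono (Set.Icc_subset_Icc hz.1 hystarH.2)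
      · exact hcont.mono (Set.Icc_subset_Icc hz.1 hystarH.2)
      · intro x hx
        exact hudAt x ⟨hx.1, hx.2.trans hyz'⟩
      · intro y hy
        exact hsub z hz y ⟨hz.1.trans hy.1, hy.2.trans hystarH.2⟩
      · filter_upwards [hq1' (Set.Ioc z ystar)
          (fun t ht => hIoosub ⟨ht.1, ht.2.trans_lt hyz'⟩),
          ae_restrict_of_forall_mem (μ := volume) measurableSet_Ioc
            (fun t (ht : t ∈ Set.Ioc z ystar) => hsgn t ⟨ht.1, ht.2.trans_lt hyz'⟩)]
          with t h1 h2
        constructor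
        · exact h2.le
        · rw [hgdef]; beta_reduce; nlinarith [h1, h2]
      · exact hcrit
      · exact huz
    have hB : (u ystar) ^ 2 ≤ (u' z') ^ 2 := by
      apply keyB g u u' ystar z' hyz'.le
      · exact hgint ystar hystarH z' hz'
      · exact hu_cont.mono (Set.Icc_subset_Icc hystarH.1 hz'.2)
      · exact hcont.mono (Set.Icc_subset_Icc hystarH.1 hz'.2)
      · intro x hx
        exact hudAt x ⟨hzy.trans hx.1, hx.2⟩
      · intro y hy
        exact hsub ystar hystarH y ⟨hystarH.1.trans hy.1, hy.2.trans hz'.2⟩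
      · have hnn : ∀ t ∈ Set.Ioc ystar z', 0 ≤ u t := by
          intro t ht
          rcases eq_or_lt_of_le ht.2 with h | h
          · rw [h, huz']
          · exact (hsgn t ⟨hzy.trans ht.1, h⟩).le
        filter_upwards [hq1' (Set.Ioc ystar z')
          (fun t ht => ⟨hystarH.1.trans ht.1.le, ht.2.trans hz'.2⟩),
          ae_restrict_of_forall_mem (μ := volume) measurableSet_Ioc hnn] with t h1 h2
        constructor
        · exact h2
        · rw [hgdef]; beta_reduce; nlinarith [h1, h2]
      · exact hcrit
      · exact huz'
    exact le_min hA hB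
end

section
/- Fix ε > 0, H > 0, constants 0 < c_m ≤ c_M, μ₁ > 0 and L ≥ 0. There exists r > 0 depending only on ε, H, c_m, c_M, μ₁, L with the following property: for every Lipschitz diffusion coefficient c on [0,H] with c_m ≤ c ≤ c_M and Lipschitz constant at most L, every μ ≥ μ₁ and λ ≥ (c_M + ε) μ², and every normalized reduced eigenfunction u for (c, μ, λ), one has u(y)² + u'(y)² ≥ r² for all y ∈ [0,H]. -/
/-!
Write the equation as `u'' = -q u` with `q = λ / c - μ²`. The energy `u² + u'² / q` has
derivative `-(q' / q²) u'²`, but `q` need not be differentiable since `c` is only Lipschitz, so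
`1 / q` is replaced by its average `p` over windows of radius `√(c_m / λ)`. Then
`|1 - p q| ≤ k √p` and `|p'| ≤ k p` with `k = L (c_M + ε)² / (ε² c_m)` independent of `λ` and
`μ`, so `E = u² + p u'²` satisfies `|E'| ≤ 2 k E` and, by Grönwall, changes by at most a factor
`exp (2 k H)` across `[0, H]`. The normalization gives a point where `u² ≥ c_m / H`, and
`E ≤ max 1 (c_M / (ε μ₁²)) (u² + u'²)`.
-/

open Set MeasureTheory Filter

open Real

section Gronwall

variable {F D : ℝ → ℝ} {a b K : ℝ}

theorem monotoneOn_mul_exp_of_neg_mul_le_deriv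
    (hF : ∀ y ∈ Icc a b, HasDerivWithinAt F (D y) (Icc a b) y)
    (hD : ∀ y ∈ Icc a b, -(K * F y) ≤ D y) :
    MonotoneOn (fun t => F t * exp (K * t)) (Icc a b) := by
  have hderiv : ∀ y ∈ Icc a b, HasDerivWithinAt (fun t => F t * exp (K * t))
      (exp (K * y) * (D y + K * F y)) (Icc a b) y := fun y hy => by
    refine ((hF y hy).mul ((hasDerivAt_id' y).const_mul K).exp.hasDerivWithinAt).congr_deriv ?_
    ring
  refine monotoneOn_of_hasDerivWithinAt_nonneg (convex_Icc a b)
    (fun y hy => (hderiv y hy).continuousWithinAt)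
    (fun y hy => (hderiv y (interior_subset hy)).mono interior_subset) fun y hy => ?_
  have := hD y (interior_subset hy)
  exact mul_nonneg (exp_pos _).le (by linarith)

theorem mul_exp_neg_abs_le_of_abs_deriv_le
    (hF : ∀ y ∈ Icc a b, HasDerivWithinAt F (D y) (Icc a b) y)
    (hD : ∀ y ∈ Icc a b, |D y| ≤ K * F y) {x y : ℝ} (hx : x ∈ Icc a b) (hy : y ∈ Icc a b) :
    F x * exp (-(K * |x - y|)) ≤ F y := by
  rcases le_total x y with hxy | hyx
  · have hmono := monotoneOn_mul_exp_of_neg_mul_le_deriv hF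
      (fun t ht => neg_le_of_abs_le (hD t ht)) hx hy hxy
    calc F x * exp (-(K * |x - y|)) = F x * exp (K * x) * exp (-(K * y)) := by
          rw [abs_of_nonpos (sub_nonpos.2 hxy), mul_assoc, ← exp_add]; ring_nf
      _ ≤ F y * exp (K * y) * exp (-(K * y)) := by gcongr
      _ = F y := by rw [mul_assoc, ← exp_add]; simp
  · -- the backward estimate is the forward one for `-F` and `-K`
    have hmono := monotoneOn_mul_exp_of_neg_mul_le_deriv (F := fun t => -F t) (K := -K)
      (fun t ht => (hF t ht).neg) (fun t ht => by linarith [le_of_abs_le (hD t ht)]) hy hx hyx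
    have hmono' : F x * exp (-(K * x)) ≤ F y * exp (-(K * y)) := by
      simp only [neg_mul] at hmono; linarith
    calc F x * exp (-(K * |x - y|)) = F x * exp (-(K * x)) * exp (K * y) := by
          rw [abs_of_nonneg (sub_nonneg.2 hyx), mul_assoc, ← exp_add]; ring_nf
      _ ≤ F y * exp (-(K * y)) * exp (K * y) := by gcongr
      _ = F y := by rw [mul_assoc, ← exp_add]; simp

end Gronwall

theorem hasDerivWithinAt_energy {s : Set ℝ} {u u' p : ℝ → ℝ} {q p' y : ℝ}
    (hu : HasDerivWithinAt u (u' y) s y) (hu' : HasDerivWithinAt u' (-(q * u y)) s y)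
    (hp : HasDerivAt p p' y) :
    HasDerivWithinAt (fun t => u t ^ 2 + p t * u' t ^ 2)
      (2 * u y * u' y * (1 - p y * q) + p' * u' y ^ 2) s y := by
  refine ((hu.pow 2).add (hp.hasDerivWithinAt.mul (hu'.pow 2))).congr_deriv ?_
  simp only [Pi.pow_apply]
  push_cast
  ring

theorem abs_energy_deriv_le {a b p q p' k : ℝ} (hp : 0 < p) (hpq : |1 - p * q| ≤ k * √p)
    (hp' : |p'| ≤ k * p) :
    |2 * a * b * (1 - p * q) + p' * b ^ 2| ≤ 2 * k * (a ^ 2 + p * b ^ 2) := by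
  have hk : 0 ≤ k := nonneg_of_mul_nonneg_left ((abs_nonneg _).trans hp') hp
  have hamgm : 2 * |a| * |b| * √p ≤ a ^ 2 + p * b ^ 2 := by
    have := two_mul_le_add_sq |a| (√p * |b|)
    rw [mul_pow, sq_sqrt hp.le, sq_abs, sq_abs] at this
    linarith
  calc |2 * a * b * (1 - p * q) + p' * b ^ 2|
      ≤ 2 * |a| * |b| * |1 - p * q| + |p'| * b ^ 2 := by
        refine (abs_add_le _ _).trans (le_of_eq ?_)
        rw [abs_mul, abs_mul, abs_mul, abs_two, abs_mul, abs_pow, sq_abs]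
    _ ≤ 2 * |a| * |b| * (k * √p) + k * p * b ^ 2 := by gcongr
    _ ≤ 2 * k * (a ^ 2 + p * b ^ 2) := by nlinarith [mul_nonneg hk (sq_nonneg a)]

theorem energy_mul_exp_le {a b k : ℝ} {u u' p p' q : ℝ → ℝ}
    (hu : ∀ y ∈ Icc a b, HasDerivWithinAt u (u' y) (Icc a b) y)
    (hu' : ∀ y ∈ Icc a b, HasDerivWithinAt u' (-(q y * u y)) (Icc a b) y)
    (hp : ∀ y, HasDerivAt p (p' y) y) (hp_pos : ∀ y ∈ Icc a b, 0 < p y)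
    (hpq : ∀ y ∈ Icc a b, |1 - p y * q y| ≤ k * √(p y))
    (hp' : ∀ y ∈ Icc a b, |p' y| ≤ k * p y) {x y : ℝ} (hx : x ∈ Icc a b) (hy : y ∈ Icc a b) :
    (u x ^ 2 + p x * u' x ^ 2) * exp (-(2 * k * |x - y|)) ≤ u y ^ 2 + p y * u' y ^ 2 :=
  mul_exp_neg_abs_le_of_abs_deriv_le
    (fun t ht => hasDerivWithinAt_energy (hu t ht) (hu' t ht) (hp t))
    (fun t ht => abs_energy_deriv_le (hp_pos t ht) (hpq t ht) (hp' t ht)) hx hy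

section IntervalAverage

variable {g : ℝ → ℝ} {δ : ℝ}

theorem hasDerivAt_interval_average_symm (hg : Continuous g) (y : ℝ) :
    HasDerivAt (fun y => ⨍ t in (y - δ)..(y + δ), g t)
      ((g (y + δ) - g (y - δ)) / (2 * δ)) y := by
  have hG (x : ℝ) : HasDerivAt (fun x => ∫ t in (0:ℝ)..x, g t) (g x) x :=
    (hg.integral_hasStrictDerivAt 0 x).hasDerivAt
  have heq : (fun y => ⨍ t in (y - δ)..(y + δ), g t) =
      fun y => ((∫ t in (0:ℝ)..(y + δ), g t) - ∫ t in (0:ℝ)..(y - δ), g t) / (2 * δ) := by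
    funext y
    rw [interval_average_eq_div, intervalIntegral.integral_interval_sub_left
      (hg.intervalIntegrable _ _) (hg.intervalIntegrable _ _)]
    ring_nf
  rw [heq]
  exact (((hG _).comp_add_const y δ).sub ((hG _).comp_sub_const y δ)).div_const _

theorem exists_eq_interval_average_symm (hg : Continuous g) (hδ : 0 < δ) (y : ℝ) :
    ∃ ξ, |ξ - y| ≤ δ ∧ g ξ = ⨍ t in (y - δ)..(y + δ), g t := by
  obtain ⟨ξ, hξ, heq⟩ :=
    exists_eq_interval_average (by linarith : y - δ < y + δ).ne hg.continuousOn
  rw [uIoo_of_le (by linarith)] at hξ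
  exact ⟨ξ, abs_sub_le_iff.2 ⟨by linarith [hξ.2], by linarith [hξ.1]⟩, heq⟩

theorem exists_hasDerivAt_weight {α P k : ℝ} (hα : 0 < α) (hg : ∀ t, α ≤ g t ∧ g t ≤ P)
    (hlip : ∀ s t, |g s - g t| ≤ k * α * |s - t|) :
    ∃ p p' : ℝ → ℝ, (∀ y, HasDerivAt p (p' y) y) ∧ (∀ y, α ≤ p y ∧ p y ≤ P) ∧
      (∀ y, |1 - p y * (g y)⁻¹| ≤ k * √(p y)) ∧ ∀ y, |p' y| ≤ k * p y := by
  have hcont : Continuous g :=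
    (LipschitzWith.of_dist_le' fun s t => by simpa only [Real.dist_eq] using hlip s t).continuous
  have hδ : 0 < √α := sqrt_pos.2 hα
  have hk : 0 ≤ k := by
    have := (abs_nonneg _).trans (hlip 1 0)
    norm_num at this
    exact nonneg_of_mul_nonneg_left this hα
  refine ⟨fun y => ⨍ t in (y - √α)..(y + √α), g t,
    fun y => (g (y + √α) - g (y - √α)) / (2 * √α),
    hasDerivAt_interval_average_symm hcont, fun y => ?_, fun y => ?_, fun y => ?_⟩ <;>
  obtain ⟨ξ, hξy, hξ⟩ := exists_eq_interval_average_symm hcont hδ y <;>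
  simp only [← hξ]
  · exact hg ξ
  · have hgy : 0 < g y := hα.trans_le (hg y).1
    have hrw : 1 - g ξ * (g y)⁻¹ = (g y - g ξ) / g y := by field_simp
    calc |1 - g ξ * (g y)⁻¹| = |g y - g ξ| / g y := by rw [hrw, abs_div, abs_of_pos hgy]
      _ ≤ k * α * |y - ξ| / α := by gcongr; exacts [hlip y ξ, (hg y).1]
      _ ≤ k * α * √α / α := by gcongr; rwa [abs_sub_comm]
      _ = k * √α := by field_simp
      _ ≤ k * √(g ξ) := by gcongr; exact (hg ξ).1
  · calc |(g (y + √α) - g (y - √α)) / (2 * √α)| ≤ k * α * |y + √α - (y - √α)| / (2 * √α) := by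
          rw [abs_div, abs_of_pos (by positivity : 0 < 2 * √α)]
          gcongr
          exact hlip _ _
      _ = k * α := by
          rw [show y + √α - (y - √α) = 2 * √α by ring, abs_of_pos (by positivity)]
          field_simp
      _ ≤ k * g ξ := by gcongr; exact (hg ξ).1

end IntervalAverage

theorem hasDerivWithinAt_integral_of_continuousOn {f : ℝ → ℝ} {a b y : ℝ} (hab : a ≤ b)
    (hf : ContinuousOn f (Icc a b)) (hy : y ∈ Icc a b) :
    HasDerivWithinAt (fun x => ∫ t in a..x, f t) (f y) (Icc a b) y := by
  set F := fun t => f (projIcc a b hab t)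
  have hF : Continuous F := hf.comp_continuous (continuous_subtype_val.comp continuous_projIcc)
    fun t => (projIcc a b hab t).2
  have heq : EqOn F f (Icc a b) := fun x hx => by simp [F, projIcc_of_mem hab hx]
  refine ((hF.integral_hasStrictDerivAt a y).hasDerivAt.hasDerivWithinAt.congr (fun x hx => ?_)
    ?_).congr_deriv (heq hy)
  all_goals
    refine intervalIntegral.integral_congr fun t ht => (heq ?_).symm
    exact uIcc_subset_Icc (left_mem_Icc.2 hab) ‹_› ht

theorem ReducedEigenfunction.hasDerivWithinAt_deriv {H μ lam y : ℝ} {c u u' : ℝ → ℝ}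
    (hred : ReducedEigenfunction H c μ lam u u') (hH : 0 ≤ H) (hc : ContinuousOn c (Icc 0 H))
    (hc0 : ∀ t ∈ Icc 0 H, c t ≠ 0) (hy : y ∈ Icc 0 H) :
    HasDerivWithinAt u' (-((lam / c y - μ ^ 2) * u y)) (Icc 0 H) y := by
  obtain ⟨hu, -, hu', -⟩ := hred
  have hf : ContinuousOn (fun t => (lam / c t - μ ^ 2) * u t) (Icc 0 H) :=
    ((continuousOn_const.div hc hc0).sub continuousOn_const).mul
      fun t ht => (hu t ht).continuousWithinAt
  exact ((hasDerivWithinAt_integral_of_continuousOn hH hf hy).const_sub (u' 0)).congr hu' (hu' y hy)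

theorem exists_le_sq_of_integral_sq_div_eq_one {H c_m : ℝ} {c u : ℝ → ℝ} (hH : 0 < H)
    (hc : ∀ y ∈ Icc 0 H, c_m ≤ c y) (hcont : ContinuousOn (fun y => u y ^ 2 / c y) (Icc 0 H))
    (hnorm : ∫ y in (0:ℝ)..H, u y ^ 2 / c y = 1) :
    ∃ y ∈ Icc 0 H, c_m / H ≤ u y ^ 2 := by
  obtain ⟨y, hy, hyeq⟩ := exists_eq_interval_average hH.ne (by rwa [uIcc_of_le hH.le])
  rw [interval_average_eq_div, hnorm, sub_zero] at hyeq
  rw [uIoo_of_le hH.le] at hy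
  have hcy : 0 < c y := by
    by_contra! h
    linarith [div_nonpos_of_nonneg_of_nonpos (sq_nonneg (u y)) h, one_div_pos.2 hH]
  refine ⟨y, Ioo_subset_Icc_self hy, ?_⟩
  rw [div_eq_div_iff hcy.ne' hH.ne', one_mul] at hyeq
  rw [div_le_iff₀ hH, hyeq]
  exact hc y (Ioo_subset_Icc_self hy)

theorem abs_div_sub_mul_sub_div_sub_mul_le {x y lam m d : ℝ} (hd : 0 < d) (hlam : 0 ≤ lam)
    (hx : d ≤ lam - m * x) (hy : d ≤ lam - m * y) :
    |x / (lam - m * x) - y / (lam - m * y)| ≤ lam / d ^ 2 * |x - y| := by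
  have hx0 : 0 < lam - m * x := hd.trans_le hx
  have hy0 : 0 < lam - m * y := hd.trans_le hy
  have hrw : x / (lam - m * x) - y / (lam - m * y) =
      lam * (x - y) / ((lam - m * x) * (lam - m * y)) := by
    rw [div_sub_div _ _ hx0.ne' hy0.ne']
    ring
  rw [hrw, abs_div, abs_mul, abs_of_nonneg hlam, abs_of_pos (mul_pos hx0 hy0)]
  calc lam * |x - y| / ((lam - m * x) * (lam - m * y)) ≤ lam * |x - y| / (d * d) := by gcongr
    _ = lam / d ^ 2 * |x - y| := by ring
theorem exists_hasDerivAt_weight_of_lipschitz {c : ℝ → ℝ} {ε c_m c_M μ₁ L μ lam : ℝ}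
    (hε : 0 < ε) (hcm : 0 < c_m) (hμ₁ : 0 < μ₁) (hc : ∀ t, c_m ≤ c t ∧ c t ≤ c_M)
    (hlip : ∀ s t, |c s - c t| ≤ L * |s - t|) (hμ : μ₁ ≤ μ) (hlam : (c_M + ε) * μ ^ 2 ≤ lam) :
    ∃ p p' : ℝ → ℝ, (∀ y, HasDerivAt p (p' y) y) ∧
      (∀ y, 0 < p y ∧ p y ≤ c_M / (ε * μ₁ ^ 2)) ∧
      (∀ y, |1 - p y * (lam / c y - μ ^ 2)| ≤ L * (c_M + ε) ^ 2 / (ε ^ 2 * c_m) * √(p y)) ∧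
      ∀ y, |p' y| ≤ L * (c_M + ε) ^ 2 / (ε ^ 2 * c_m) * p y := by
  have hcM : 0 < c_M := hcm.trans_le ((hc 0).1.trans (hc 0).2)
  have hlam0 : 0 < lam := (mul_pos (by positivity) (pow_pos (hμ₁.trans_le hμ) 2)).trans_le hlam
  have hden (t : ℝ) :
      ε * μ₁ ^ 2 ≤ lam - μ ^ 2 * c t ∧ lam * ε / (c_M + ε) ≤ lam - μ ^ 2 * c t := by
    have : μ ^ 2 * c t ≤ μ ^ 2 * c_M := by gcongr; exact (hc t).2
    refine ⟨by nlinarith [pow_le_pow_left₀ hμ₁.le hμ 2], ?_⟩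
    rw [div_le_iff₀ (by positivity)]
    nlinarith
  set g := fun t => c t / (lam - μ ^ 2 * c t)
  have hg (t : ℝ) : c_m / lam ≤ g t ∧ g t ≤ c_M / (ε * μ₁ ^ 2) := by
    have hct : 0 ≤ c t := hcm.le.trans (hc t).1
    have hden0 : 0 < lam - μ ^ 2 * c t := (by positivity : 0 < ε * μ₁ ^ 2).trans_le (hden t).1
    constructor
    · calc c_m / lam ≤ c t / lam := by gcongr; exact (hc t).1
        _ ≤ c t / (lam - μ ^ 2 * c t) := by gcongr; nlinarith
    · exact div_le_div₀ hcM.le (hc t).2 (by positivity) (hden t).1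
  have hg_lip (s t : ℝ) :
      |g s - g t| ≤ L * (c_M + ε) ^ 2 / (ε ^ 2 * c_m) * (c_m / lam) * |s - t| :=
    calc |g s - g t| ≤ lam / (lam * ε / (c_M + ε)) ^ 2 * |c s - c t| :=
          abs_div_sub_mul_sub_div_sub_mul_le (by positivity) hlam0.le (hden s).2 (hden t).2
      _ ≤ lam / (lam * ε / (c_M + ε)) ^ 2 * (L * |s - t|) := by gcongr; exact hlip s t
      _ = L * (c_M + ε) ^ 2 / (ε ^ 2 * c_m) * (c_m / lam) * |s - t| := by field_simp
  obtain ⟨p, p', hp, hpP, hpq, hp'⟩ := exists_hasDerivAt_weight (div_pos hcm hlam0) hg hg_lip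
  refine ⟨p, p', hp, fun y => ⟨(div_pos hcm hlam0).trans_le (hpP y).1, (hpP y).2⟩, fun y => ?_, hp'⟩
  have hq : (g y)⁻¹ = lam / c y - μ ^ 2 := by
    have := (hcm.trans_le (hc y).1).ne'
    simp only [g, inv_div]
    field_simp
  rw [← hq]
  exact hpq y

theorem ReducedEigenfunction.le_sq_add_sq {ε H c_m c_M μ₁ L μ lam y : ℝ} {c u u' : ℝ → ℝ}
    (hred : ReducedEigenfunction H c μ lam u u') (hε : 0 < ε) (hH : 0 < H) (hcm : 0 < c_m)
    (hμ₁ : 0 < μ₁) (hL : 0 ≤ L) (hc : ∀ y ∈ Icc (0:ℝ) H, c_m ≤ c y ∧ c y ≤ c_M)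
    (hlip : ∀ x ∈ Icc (0:ℝ) H, ∀ y ∈ Icc (0:ℝ) H, |c x - c y| ≤ L * |x - y|)
    (hμ : μ₁ ≤ μ) (hlam : (c_M + ε) * μ ^ 2 ≤ lam)
    (hnorm : ∫ y in (0:ℝ)..H, u y ^ 2 / c y = 1) (hy : y ∈ Icc 0 H) :
    c_m / H * exp (-(2 * (L * (c_M + ε) ^ 2 / (ε ^ 2 * c_m)) * H)) / max 1 (c_M / (ε * μ₁ ^ 2))
      ≤ u y ^ 2 + u' y ^ 2 := by
  set k := L * (c_M + ε) ^ 2 / (ε ^ 2 * c_m)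
  set P := c_M / (ε * μ₁ ^ 2)
  set c' := fun t => c (projIcc 0 H hH.le t)
  have hc'_eq : EqOn c' c (Icc 0 H) := fun t ht => by simp [c', projIcc_of_mem _ ht]
  obtain ⟨p, p', hp, hpP, hpq, hp'⟩ := exists_hasDerivAt_weight_of_lipschitz (c := c') hε hcm hμ₁
    (fun t => hc _ (projIcc 0 H hH.le t).2)
    (fun s t => (hlip _ (projIcc 0 H hH.le s).2 _ (projIcc 0 H hH.le t).2).trans
      (mul_le_mul_of_nonneg_left (abs_projIcc_sub_projIcc hH.le) hL)) hμ hlam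
  have hc_cont : ContinuousOn c (Icc 0 H) :=
    (LipschitzOnWith.of_dist_le' fun x hx y hy => by
      simpa only [Real.dist_eq] using hlip x hx y hy).continuousOn
  have hc0 (t : ℝ) (ht : t ∈ Icc 0 H) : c t ≠ 0 := (hcm.trans_le (hc t ht).1).ne'
  have hu_cont : ContinuousOn u (Icc 0 H) := fun t ht => (hred.1 t ht).continuousWithinAt
  obtain ⟨y₀, hy₀, hu₀⟩ := exists_le_sq_of_integral_sq_div_eq_one hH (fun t ht => (hc t ht).1)
    ((hu_cont.pow 2).div hc_cont hc0) hnorm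
  have henergy := energy_mul_exp_le hred.1
    (fun t ht => hred.hasDerivWithinAt_deriv hH.le hc_cont hc0 ht) hp (fun t _ => (hpP t).1)
    (fun t ht => hc'_eq ht ▸ hpq t) (fun t _ => hp' t) hy₀ hy
  have hk : 0 ≤ k := by positivity
  calc c_m / H * exp (-(2 * k * H)) / max 1 P
      ≤ (u y₀ ^ 2 + p y₀ * u' y₀ ^ 2) * exp (-(2 * k * |y₀ - y|)) / max 1 P := by
        have hE : 0 ≤ p y₀ * u' y₀ ^ 2 := mul_nonneg (hpP y₀).1.le (sq_nonneg _)
        gcongr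
        · linarith
        · exact abs_sub_le_iff.2 ⟨by linarith [hy₀.2, hy.1], by linarith [hy.2, hy₀.1]⟩
    _ ≤ (u y ^ 2 + p y * u' y ^ 2) / max 1 P := by gcongr
    _ ≤ u y ^ 2 + u' y ^ 2 := by
        rw [div_le_iff₀ (by positivity)]
        nlinarith [le_max_left 1 P, (hpP y).2.trans (le_max_right 1 P), sq_nonneg (u y),
          sq_nonneg (u' y)]

theorem stmt9_general
    (ε H c_m c_M μ₁ L : ℝ)
    (hε : 0 < ε) (hH : 0 < H) (hcm : 0 < c_m)
    (hμ₁ : 0 < μ₁) (hL : 0 ≤ L) :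
    ∃ r : ℝ, 0 < r ∧
      ∀ (c u u' : ℝ → ℝ) (μ lam : ℝ),
        Measurable c → (∀ y ∈ Set.Icc (0:ℝ) H, c_m ≤ c y ∧ c y ≤ c_M) →
        (∀ x ∈ Set.Icc (0:ℝ) H, ∀ y ∈ Set.Icc (0:ℝ) H, |c x - c y| ≤ L * |x - y|) →
        μ₁ ≤ μ → (c_M + ε) * μ ^ 2 ≤ lam →
        ReducedEigenfunction H c μ lam u u' →
        (∫ y in (0:ℝ)..H, (u y) ^ 2 / c y) = 1 →
        ∀ y ∈ Set.Icc (0:ℝ) H, r ^ 2 ≤ (u y) ^ 2 + (u' y) ^ 2 := by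
  have hr : 0 < c_m / H * exp (-(2 * (L * (c_M + ε) ^ 2 / (ε ^ 2 * c_m)) * H)) /
      max 1 (c_M / (ε * μ₁ ^ 2)) := by positivity
  refine ⟨_, sqrt_pos.2 hr, fun c u u' μ lam _ hc hlip hμ hlam hred hnorm y hy => ?_⟩
  rw [sq_sqrt hr.le]
  exact hred.le_sq_add_sq hε hH hcm hμ₁ hL hc hlip hμ hlam hnorm hy

/-- Minimal amplitude property, uniformly over Lipschitz diffusion coefficients. -/
theorem stmt9
    (ε H c_m c_M μ₁ L : ℝ)
    (hε : 0 < ε) (hH : 0 < H) (hcm : 0 < c_m) (hcmM : c_m ≤ c_M)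
    (hμ₁ : 0 < μ₁) (hL : 0 ≤ L) :
    ∃ r : ℝ, 0 < r ∧
      ∀ (c u u' : ℝ → ℝ) (μ lam : ℝ),
        Measurable c → (∀ y ∈ Set.Icc (0:ℝ) H, c_m ≤ c y ∧ c y ≤ c_M) →
        (∀ x ∈ Set.Icc (0:ℝ) H, ∀ y ∈ Set.Icc (0:ℝ) H, |c x - c y| ≤ L * |x - y|) →
        μ₁ ≤ μ → (c_M + ε) * μ ^ 2 ≤ lam →
        ReducedEigenfunction H c μ lam u u' →
        (∫ y in (0:ℝ)..H, (u y) ^ 2 / c y) = 1 →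
        ∀ y ∈ Set.Icc (0:ℝ) H, r ^ 2 ≤ (u y) ^ 2 + (u' y) ^ 2 :=
  stmt9_general ε H c_m c_M μ₁ L hε hH hcm hμ₁ hL
end

section
/- Fix ε > 0, H > 0 and constants 0 < c_m ≤ c_M. There exists r > 0 depending only on ε, H, c_m, c_M with the following property: for every nondecreasing diffusion coefficient c : [0,H] → ℝ with c_m ≤ c(y) ≤ c_M, every μ > 0 and λ satisfying both λ ≥ (c_M + ε) μ² and λ/c_M − μ² > 1, and every normalized reduced eigenfunction u for (c, μ, λ), one has u(y)² + u'(y)² ≥ r² for all y ∈ [0,H]. -/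
/-!
Put `q = λ / c - μ²`, so that `u'' + q u = 0` with `q` nonincreasing and `q > 1`. Formally the
energy `q u² + u'²` has derivative `q' u² ≤ 0` and `u² + u'² / q` has derivative
`-q' u'² / q² ≥ 0`. Since `q` is merely monotone, both monotonicity statements are obtained from
increment bounds `ψ s - ψ t ≤ (t - s) (φ t - φ s)`, which repeated bisection turns into
`ψ s ≤ ψ t`. As `u 0 = 0`, the energy bound gives `q u² ≤ u'(0)²`, so the normalization
forces `u'(0)² ≥ (λ / c_M - μ²) c_m / H`; the second quantity then gives
`u² + u'² ≥ u'(0)² / q 0 ≥ u'(0)² c_m / λ`.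
-/

open Set MeasureTheory Filter

theorem monotoneOn_of_sub_le_mul_sub {ψ φ : ℝ → ℝ} {a b : ℝ}
    (h : ∀ s ∈ Icc a b, ∀ t ∈ Icc a b, s ≤ t →
      ψ s - ψ t ≤ (t - s) * (φ t - φ s)) :
    MonotoneOn ψ (Icc a b) := by
  have halve : ∀ n : ℕ, ∀ s ∈ Icc a b, ∀ t ∈ Icc a b, s ≤ t →
      ψ s - ψ t ≤ (1 / 2) ^ n * ((t - s) * (φ t - φ s)) := by
    intro n
    induction n with
    | zero => simpa using h
    | succ n ih =>
      intro s hs t ht hst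
      have hm : (s + t) / 2 ∈ Icc a b := ⟨by linarith [hs.1], by linarith [ht.2]⟩
      calc ψ s - ψ t = (ψ s - ψ ((s + t) / 2)) + (ψ ((s + t) / 2) - ψ t) := by ring
        _ ≤ _ := add_le_add (ih s hs _ hm (by linarith)) (ih _ hm t ht (by linarith))
        _ = _ := by ring
  intro s hs t ht hst
  have hlim : Tendsto (fun n : ℕ => (1 / 2 : ℝ) ^ n * ((t - s) * (φ t - φ s))) atTop
      (nhds 0) := by
    simpa using (tendsto_pow_atTop_nhds_zero_of_lt_one (by norm_num : (0 : ℝ) ≤ 1 / 2)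
      (by norm_num)).mul_const ((t - s) * (φ t - φ s))
  linarith [ge_of_tendsto' hlim fun n => halve n s hs t ht hst]

theorem AntitoneOn.abs_le_abs_add_abs {q : ℝ → ℝ} {a b y : ℝ} (hq : AntitoneOn q (Icc a b))
    (hy : y ∈ Icc a b) : |q y| ≤ |q a| + |q b| :=
  abs_le.2
    ⟨by linarith [neg_abs_le (q b), abs_nonneg (q a), hq hy ⟨hy.1.trans hy.2, le_rfl⟩ hy.2],
      by linarith [le_abs_self (q a), abs_nonneg (q b), hq ⟨le_rfl, hy.1.trans hy.2⟩ hy hy.1]⟩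

section SecondOrderODE

variable {a b : ℝ} {q u u' : ℝ → ℝ}

/-- `u` solves `u'' + q u = 0` on `[a, b]` in the Carathéodory sense, with derivative `u'`. -/
structure IsCaratheodorySolution (a b : ℝ) (q u u' : ℝ → ℝ) : Prop where
  hasDerivWithinAt : ∀ y ∈ Icc a b, HasDerivWithinAt u (u' y) (Icc a b) y
  continuousOn_deriv : ContinuousOn u' (Icc a b)
  deriv_eq : ∀ y ∈ Icc a b, u' y = u' a - ∫ t in a..y, q t * u t

theorem IsCaratheodorySolution.continuousOn (hu : IsCaratheodorySolution a b q u u') :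
    ContinuousOn u (Icc a b) :=
  HasDerivWithinAt.continuousOn hu.hasDerivWithinAt

theorem intervalIntegrable_mul_of_antitoneOn (hu : ContinuousOn u (Icc a b))
    (hq : AntitoneOn q (Icc a b)) {s t : ℝ} (hs : s ∈ Icc a b) (ht : t ∈ Icc a b) :
    IntervalIntegrable (fun y => q y * u y) volume s t :=
  ((hq.mono (uIcc_subset_Icc hs ht)).intervalIntegrable).mul_continuousOn
    (hu.mono (uIcc_subset_Icc hs ht))

theorem sub_eq_neg_integral_of_eq_sub_integral (hu : ContinuousOn u (Icc a b))
    (hq : AntitoneOn q (Icc a b)) (hode : ∀ y ∈ Icc a b, u' y = u' a - ∫ t in a..y, q t * u t)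
    {s t : ℝ} (hs : s ∈ Icc a b) (ht : t ∈ Icc a b) :
    u' t - u' s = -∫ y in s..t, q y * u y := by
  have ha : a ∈ Icc a b := ⟨le_rfl, hs.1.trans hs.2⟩
  rw [hode t ht, hode s hs, ← intervalIntegral.integral_interval_sub_left
    (intervalIntegrable_mul_of_antitoneOn hu hq ha ht)
    (intervalIntegrable_mul_of_antitoneOn hu hq ha hs)]
  ring

theorem integral_two_mul_mul_deriv (hu : ∀ y ∈ Icc a b, HasDerivWithinAt u (u' y) (Icc a b) y)
    (hu' : ContinuousOn u' (Icc a b)) {s t : ℝ} (hs : s ∈ Icc a b) (ht : t ∈ Icc a b) :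
    ∫ y in s..t, 2 * u y * u' y = u t ^ 2 - u s ^ 2 := by
  have hsub := uIcc_subset_Icc hs ht
  have hderiv : ∀ y ∈ uIcc s t, HasDerivWithinAt u (u' y) (uIcc s t) y :=
    fun y hy => (hu y (hsub hy)).mono hsub
  have hint : IntervalIntegrable u' volume s t := (hu'.mono hsub).intervalIntegrable
  simp only [sq, ← intervalIntegral.integral_deriv_mul_eq_sub_of_hasDerivWithinAt hderiv hderiv
    hint hint]
  congr 1 with y
  ring

theorem sq_increment_eq_integral (hu : IsCaratheodorySolution a b q u u')
    (hq : AntitoneOn q (Icc a b)) {s t : ℝ} (hs : s ∈ Icc a b) (ht : t ∈ Icc a b) :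
    q t * (u t ^ 2 - u s ^ 2) + (u' t ^ 2 - u' s ^ 2) =
      ∫ y in s..t, u y * (2 * q t * u' y - q y * (u' t + u' s)) := by
  have hsub := uIcc_subset_Icc hs ht
  have hint₁ : IntervalIntegrable (fun y => q t * (2 * u y * u' y)) volume s t :=
    (continuousOn_const.mul ((continuousOn_const.mul hu.continuousOn).mul hu.continuousOn_deriv)
      |>.mono hsub).intervalIntegrable
  have hint₂ : IntervalIntegrable (fun y => q y * u y * (u' t + u' s)) volume s t :=
    (intervalIntegrable_mul_of_antitoneOn hu.continuousOn hq hs ht).mul_const _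
  have hsplit : (fun y => u y * (2 * q t * u' y - q y * (u' t + u' s))) =
      fun y => q t * (2 * u y * u' y) - q y * u y * (u' t + u' s) := by
    ext y; ring
  rw [hsplit, intervalIntegral.integral_sub hint₁ hint₂, intervalIntegral.integral_const_mul,
    intervalIntegral.integral_mul_const,
    integral_two_mul_mul_deriv hu.hasDerivWithinAt hu.continuousOn_deriv hs ht,
    ← neg_neg (∫ y in s..t, q y * u y),
    ← sub_eq_neg_integral_of_eq_sub_integral hu.continuousOn hq hu.deriv_eq hs ht]
  ring

theorem abs_deriv_sub_le (hu : ContinuousOn u (Icc a b)) (hq : AntitoneOn q (Icc a b))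
    (hode : ∀ y ∈ Icc a b, u' y = u' a - ∫ t in a..y, q t * u t) {M : ℝ}
    (hM : ∀ y ∈ Icc a b, |u y| ≤ M) {x y : ℝ} (hx : x ∈ Icc a b) (hy : y ∈ Icc a b) :
    |u' y - u' x| ≤ (|q a| + |q b|) * M * |y - x| := by
  rw [sub_eq_neg_integral_of_eq_sub_integral hu hq hode hx hy, abs_neg, ← Real.norm_eq_abs]
  refine intervalIntegral.norm_integral_le_of_norm_le_const fun z hz => ?_
  have hz' := uIcc_subset_Icc hx hy (uIoc_subset_uIcc hz)
  rw [Real.norm_eq_abs, abs_mul]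
  exact mul_le_mul (hq.abs_le_abs_add_abs hz') (hM z hz') (abs_nonneg _)
    ((abs_nonneg _).trans (hq.abs_le_abs_add_abs hz'))

theorem abs_two_mul_deriv_sub_le (hu : ContinuousOn u (Icc a b)) (hq : AntitoneOn q (Icc a b))
    (hode : ∀ y ∈ Icc a b, u' y = u' a - ∫ t in a..y, q t * u t) {M M' : ℝ}
    (hM : ∀ y ∈ Icc a b, |u y| ≤ M) (hM' : ∀ y ∈ Icc a b, |u' y| ≤ M') {s t y : ℝ}
    (hs : s ∈ Icc a b) (ht : t ∈ Icc a b) (hsy : s ≤ y) (hyt : y ≤ t) :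
    |2 * q t * u' y - q y * (u' t + u' s)| ≤
      2 * (|q a| + |q b|) * ((|q a| + |q b|) * M * (t - s)) + (q s - q t) * (2 * M') := by
  have hy : y ∈ Icc a b := ⟨hs.1.trans hsy, hyt.trans ht.2⟩
  have hM0 : 0 ≤ M := (abs_nonneg _).trans (hM s hs)
  have hQt := hq.abs_le_abs_add_abs ht
  have hdt : |u' y - u' t| ≤ (|q a| + |q b|) * M * (t - s) := by
    refine (abs_deriv_sub_le hu hq hode hM ht hy).trans
      (mul_le_mul_of_nonneg_left ?_ (by positivity))
    rw [abs_sub_comm, abs_of_nonneg (by linarith)]; linarith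
  have hds : |u' y - u' s| ≤ (|q a| + |q b|) * M * (t - s) := by
    refine (abs_deriv_sub_le hu hq hode hM hs hy).trans
      (mul_le_mul_of_nonneg_left ?_ (by positivity))
    rw [abs_of_nonneg (by linarith)]; linarith
  have hsum : |u' t + u' s| ≤ 2 * M' := (abs_add_le _ _).trans (by linarith [hM' t ht, hM' s hs])
  have hsplit : 2 * q t * u' y - q y * (u' t + u' s) =
      q t * (u' y - u' t) + q t * (u' y - u' s) + (q t - q y) * (u' t + u' s) := by ring
  rw [hsplit]
  refine (abs_add_three _ _ _).trans ?_
  have hqty := hq hy ht hyt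
  rw [abs_mul, abs_mul, abs_mul, abs_of_nonpos (sub_nonpos.2 hqty)]
  nlinarith [mul_le_mul hQt hdt (abs_nonneg _) (by positivity),
    mul_le_mul hQt hds (abs_nonneg _) (by positivity),
    mul_le_mul (by linarith [hq hs hy hsy] : -(q t - q y) ≤ q s - q t) hsum (abs_nonneg _)
      (by linarith [hq hs ht (hsy.trans hyt)])]

theorem exists_abs_sq_increment_le (hu : IsCaratheodorySolution a b q u u')
    (hq : AntitoneOn q (Icc a b)) :
    ∃ C, ∀ s ∈ Icc a b, ∀ t ∈ Icc a b, s ≤ t →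
      |q t * (u t ^ 2 - u s ^ 2) + (u' t ^ 2 - u' s ^ 2)| ≤
        C * (t - s) * (t - s + (q s - q t)) := by
  obtain ⟨M, hM⟩ := isCompact_Icc.exists_bound_of_continuousOn hu.continuousOn
  obtain ⟨M', hM'⟩ := isCompact_Icc.exists_bound_of_continuousOn hu.continuousOn_deriv
  simp only [Real.norm_eq_abs] at hM hM'
  set Q := |q a| + |q b|
  refine ⟨2 * M * (Q ^ 2 * M + M'), fun s hs t ht hst => ?_⟩
  have hM0 : 0 ≤ M := (abs_nonneg _).trans (hM s hs)
  have hM'0 : 0 ≤ M' := (abs_nonneg _).trans (hM' s hs)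
  rw [sq_increment_eq_integral hu hq hs ht, ← Real.norm_eq_abs]
  refine (intervalIntegral.norm_integral_le_of_norm_le_const
    (C := 2 * M * (Q ^ 2 * M + M') * (t - s + (q s - q t))) fun y hy => ?_).trans
    (le_of_eq (by rw [abs_of_nonneg (sub_nonneg.2 hst)]; ring))
  rw [uIoc_of_le hst] at hy
  have hy' : y ∈ Icc a b := ⟨hs.1.trans hy.1.le, hy.2.trans ht.2⟩
  rw [Real.norm_eq_abs, abs_mul]
  calc |u y| * |2 * q t * u' y - q y * (u' t + u' s)|
      ≤ M * (2 * Q * (Q * M * (t - s)) + (q s - q t) * (2 * M')) :=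
        mul_le_mul (hM y hy')
          (abs_two_mul_deriv_sub_le hu.continuousOn hq hu.deriv_eq hM hM' hs ht hy.1.le hy.2)
          (abs_nonneg _) hM0
    _ ≤ 2 * M * (Q ^ 2 * M + M') * (t - s + (q s - q t)) := by
        nlinarith [mul_nonneg (mul_nonneg hM0 hM'0) (sub_nonneg.2 hst),
          mul_nonneg (mul_nonneg hM0 (mul_nonneg (sq_nonneg Q) hM0)) (sub_nonneg.2 (hq hs ht hst))]

theorem antitoneOn_mul_sq_add_sq (hu : IsCaratheodorySolution a b q u u')
    (hq : AntitoneOn q (Icc a b)) :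
    AntitoneOn (fun y => q y * u y ^ 2 + u' y ^ 2) (Icc a b) := by
  obtain ⟨C, hC⟩ := exists_abs_sq_increment_le hu hq
  have hneg : MonotoneOn (fun y => -(q y * u y ^ 2 + u' y ^ 2)) (Icc a b) := by
    refine monotoneOn_of_sub_le_mul_sub (φ := fun y => C * (y - q y)) fun s hs t ht hst => ?_
    have hdrop : (q t - q s) * u s ^ 2 ≤ 0 :=
      mul_nonpos_of_nonpos_of_nonneg (sub_nonpos.2 (hq hs ht hst)) (sq_nonneg _)
    calc -(q s * u s ^ 2 + u' s ^ 2) - -(q t * u t ^ 2 + u' t ^ 2)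
        = q t * (u t ^ 2 - u s ^ 2) + (u' t ^ 2 - u' s ^ 2) + (q t - q s) * u s ^ 2 := by ring
      _ ≤ C * (t - s) * (t - s + (q s - q t)) := by
          linarith [le_abs_self (q t * (u t ^ 2 - u s ^ 2) + (u' t ^ 2 - u' s ^ 2)),
            hC s hs t ht hst]
      _ = (t - s) * (C * (t - q t) - C * (s - q s)) := by ring
  exact fun s hs t ht hst => neg_le_neg_iff.1 (hneg hs ht hst)

theorem monotoneOn_sq_add_sq_div (hu : IsCaratheodorySolution a b q u u')
    (hq : AntitoneOn q (Icc a b)) (hqpos : ∀ y ∈ Icc a b, 0 < q y) :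
    MonotoneOn (fun y => u y ^ 2 + u' y ^ 2 / q y) (Icc a b) := by
  obtain ⟨C, hC⟩ := exists_abs_sq_increment_le hu hq
  refine monotoneOn_of_sub_le_mul_sub (φ := fun y => C / q b * (y - q y)) fun s hs t ht hst => ?_
  set I := q t * (u t ^ 2 - u s ^ 2) + (u' t ^ 2 - u' s ^ 2)
  have hb : b ∈ Icc a b := ⟨hs.1.trans hs.2, le_rfl⟩
  have hqt := hqpos t ht
  have hdrop : u' s ^ 2 / q s ≤ u' s ^ 2 / q t :=
    div_le_div_of_nonneg_left (sq_nonneg _) hqt (hq hs ht hst)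
  calc u s ^ 2 + u' s ^ 2 / q s - (u t ^ 2 + u' t ^ 2 / q t)
      ≤ -I / q t := by
        rw [neg_div, add_div, mul_div_cancel_left₀ _ hqt.ne', sub_div]
        linarith
    _ ≤ |I| / q b := div_le_div₀ (abs_nonneg _) (neg_le_abs I) (hqpos b hb) (hq ht hb ht.2)
    _ ≤ C * (t - s) * (t - s + (q s - q t)) / q b :=
        div_le_div_of_nonneg_right (hC s hs t ht hst) (hqpos b hb).le
    _ = (t - s) * (C / q b * (t - q t) - C / q b * (s - q s)) := by ring

theorem mul_sq_le_sq_deriv_of_eq_zero (hu : IsCaratheodorySolution a b q u u')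
    (hq : AntitoneOn q (Icc a b)) (hu0 : u a = 0) {y : ℝ} (hy : y ∈ Icc a b) :
    q y * u y ^ 2 ≤ u' a ^ 2 := by
  have := antitoneOn_mul_sq_add_sq hu hq ⟨le_rfl, hy.1.trans hy.2⟩ hy hy.1
  simp only [hu0] at this
  nlinarith [sq_nonneg (u' y)]

theorem sq_deriv_div_le_sq_add_sq (hu : IsCaratheodorySolution a b q u u')
    (hq : AntitoneOn q (Icc a b)) (hu0 : u a = 0)
    (hq1 : ∀ y ∈ Icc a b, 1 ≤ q y) {y : ℝ} (hy : y ∈ Icc a b) :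
    u' a ^ 2 / q a ≤ u y ^ 2 + u' y ^ 2 := by
  have hqpos : ∀ y ∈ Icc a b, 0 < q y := fun y hy => one_pos.trans_le (hq1 y hy)
  have := monotoneOn_sq_add_sq_div hu hq hqpos ⟨le_rfl, hy.1.trans hy.2⟩ hy hy.1
  simp only [hu0] at this
  linarith [div_le_self (sq_nonneg (u' y)) (hq1 y hy)]

theorem mul_le_sub_mul_sq_deriv_of_integral_sq_div_eq_one {c : ℝ → ℝ} {q₀ c₀ : ℝ}
    (hu : IsCaratheodorySolution a b q u u') (hq : AntitoneOn q (Icc a b)) (hu0 : u a = 0)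
    (hq₀ : 0 < q₀) (hc₀ : 0 < c₀) (hq₀q : ∀ y ∈ Icc a b, q₀ ≤ q y)
    (hc₀c : ∀ y ∈ Icc a b, c₀ ≤ c y) (hab : a ≤ b)
    (hnorm : ∫ y in a..b, u y ^ 2 / c y = 1) :
    q₀ * c₀ ≤ (b - a) * u' a ^ 2 := by
  have hpt : ∀ y ∈ Icc a b, u y ^ 2 / c y ≤ u' a ^ 2 / (q₀ * c₀) := fun y hy => by
    have hsq : q₀ * u y ^ 2 ≤ u' a ^ 2 :=
      (mul_le_mul_of_nonneg_right (hq₀q y hy) (sq_nonneg _)).trans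
        (mul_sq_le_sq_deriv_of_eq_zero hu hq hu0 hy)
    rw [div_le_div_iff₀ (hc₀.trans_le (hc₀c y hy)) (by positivity)]
    nlinarith [hc₀c y hy, sq_nonneg (u y)]
  have hle := intervalIntegral.integral_mono_on hab
    (intervalIntegral.intervalIntegrable_of_integral_ne_zero (hnorm.symm ▸ one_ne_zero))
    intervalIntegrable_const hpt
  rwa [hnorm, intervalIntegral.integral_const, smul_eq_mul, ← mul_div_assoc,
    one_le_div (by positivity)] at hle

end SecondOrderODE

theorem antitoneOn_div_sub {c : ℝ → ℝ} {s : Set ℝ} {lam : ℝ} (hlam : 0 ≤ lam) (κ : ℝ)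
    (hc : MonotoneOn c s) (hcpos : ∀ y ∈ s, 0 < c y) :
    AntitoneOn (fun y => lam / c y - κ) s := fun x hx _ hy hxy =>
  sub_le_sub_right (div_le_div_of_nonneg_left hlam (hcpos x hx) (hc hx hy hxy)) κ

namespace ReducedEigenfunction

variable {H c_m c_M μ lam : ℝ} {c u u' : ℝ → ℝ}

theorem isCaratheodorySolution (hu : ReducedEigenfunction H c μ lam u u') :
    IsCaratheodorySolution 0 H (fun y => lam / c y - μ ^ 2) u u' :=
  ⟨hu.1, hu.2.1, hu.2.2.1⟩

theorem sq_deriv_zero_mul_div_le (hu : ReducedEigenfunction H c μ lam u u')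
    (hc : ∀ y ∈ Icc 0 H, c_m ≤ c y ∧ c y ≤ c_M) (hmono : MonotoneOn c (Icc 0 H))
    (hcm : 0 < c_m) (hlam : 0 < lam) (hq : 1 < lam / c_M - μ ^ 2) {y : ℝ} (hy : y ∈ Icc 0 H) :
    u' 0 ^ 2 * c_m / lam ≤ u y ^ 2 + u' y ^ 2 := by
  have hu0 : u 0 = 0 := hu.2.2.2.2.1
  have hcpos : ∀ y ∈ Icc 0 H, 0 < c y := fun y hy => hcm.trans_le (hc y hy).1
  have hq1 : ∀ y ∈ Icc 0 H, 1 ≤ lam / c y - μ ^ 2 := fun y hy => hq.le.trans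
    (sub_le_sub_right (div_le_div_of_nonneg_left hlam.le (hcpos y hy) (hc y hy).2) _)
  have h0 : (0 : ℝ) ∈ Icc 0 H := ⟨le_rfl, hy.1.trans hy.2⟩
  have hq0 : lam / c 0 - μ ^ 2 ≤ lam / c_m := (sub_le_self _ (sq_nonneg μ)).trans
    (div_le_div_of_nonneg_left hlam.le hcm (hc 0 h0).1)
  calc u' 0 ^ 2 * c_m / lam = u' 0 ^ 2 / (lam / c_m) := by field_simp
    _ ≤ u' 0 ^ 2 / (lam / c 0 - μ ^ 2) := by gcongr; linarith [hq1 0 h0]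
    _ ≤ u y ^ 2 + u' y ^ 2 := sq_deriv_div_le_sq_add_sq hu.isCaratheodorySolution
        (antitoneOn_div_sub hlam.le _ hmono hcpos) hu0 hq1 hy

theorem mul_le_mul_sq_deriv_zero (hu : ReducedEigenfunction H c μ lam u u')
    (hc : ∀ y ∈ Icc 0 H, c_m ≤ c y ∧ c y ≤ c_M) (hmono : MonotoneOn c (Icc 0 H))
    (hcm : 0 < c_m) (hlam : 0 < lam) (hq : 0 < lam / c_M - μ ^ 2) (hH : 0 ≤ H)
    (hnorm : ∫ y in (0:ℝ)..H, u y ^ 2 / c y = 1) :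
    (lam / c_M - μ ^ 2) * c_m ≤ H * u' 0 ^ 2 := by
  have hu0 : u 0 = 0 := hu.2.2.2.2.1
  have hcpos : ∀ y ∈ Icc 0 H, 0 < c y := fun y hy => hcm.trans_le (hc y hy).1
  simpa using mul_le_sub_mul_sq_deriv_of_integral_sq_div_eq_one hu.isCaratheodorySolution
    (antitoneOn_div_sub hlam.le _ hmono hcpos) hu0 hq hcm
    (fun y hy => sub_le_sub_right (div_le_div_of_nonneg_left hlam.le (hcpos y hy) (hc y hy).2) _)
    (fun y hy => (hc y hy).1) hH hnorm

end ReducedEigenfunction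

/-- Minimal amplitude property, uniformly over nondecreasing diffusion coefficients. -/
theorem stmt10
    (ε H c_m c_M : ℝ)
    (hε : 0 < ε) (hH : 0 < H) (hcm : 0 < c_m) (hcmM : c_m ≤ c_M) :
    ∃ r : ℝ, 0 < r ∧
      ∀ (c u u' : ℝ → ℝ) (μ lam : ℝ),
        Measurable c → (∀ y ∈ Set.Icc (0:ℝ) H, c_m ≤ c y ∧ c y ≤ c_M) →
        MonotoneOn c (Set.Icc (0:ℝ) H) →
        0 < μ → (c_M + ε) * μ ^ 2 ≤ lam → 1 < lam / c_M - μ ^ 2 →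
        ReducedEigenfunction H c μ lam u u' →
        (∫ y in (0:ℝ)..H, (u y) ^ 2 / c y) = 1 →
        ∀ y ∈ Set.Icc (0:ℝ) H, r ^ 2 ≤ (u y) ^ 2 + (u' y) ^ 2 := by
  have hcM : 0 < c_M := hcm.trans_le hcmM
  refine ⟨√(ε * c_m ^ 2 / (H * c_M * (c_M + ε))), Real.sqrt_pos.2 (by positivity), ?_⟩
  intro c u u' μ lam _ hc hmono _ hlam hq hu hnorm y hy
  rw [Real.sq_sqrt (by positivity)]
  have hlam0 : 0 < lam :=
    (div_pos_iff_of_pos_right hcM).1 ((one_pos.trans hq).trans_le (sub_le_self _ (sq_nonneg μ)))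
  have hgap : ε / (c_M * (c_M + ε)) ≤ (lam / c_M - μ ^ 2) / lam := by
    have hμ : μ ^ 2 / lam ≤ 1 / (c_M + ε) := by
      rw [div_le_div_iff₀ hlam0 (by positivity)]; linarith
    calc ε / (c_M * (c_M + ε)) = 1 / c_M - 1 / (c_M + ε) := by field_simp; ring
      _ ≤ 1 / c_M - μ ^ 2 / lam := by linarith
      _ = (lam / c_M - μ ^ 2) / lam := by field_simp
  have hderiv := hu.mul_le_mul_sq_deriv_zero hc hmono hcm hlam0 (one_pos.trans hq) hH.le hnorm
  calc ε * c_m ^ 2 / (H * c_M * (c_M + ε))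
        = ε / (c_M * (c_M + ε)) * c_m ^ 2 / H := by field_simp
    _ ≤ (lam / c_M - μ ^ 2) / lam * c_m ^ 2 / H := by gcongr
    _ = (lam / c_M - μ ^ 2) * c_m / H * c_m / lam := by field_simp
    _ ≤ H * u' 0 ^ 2 / H * c_m / lam := by gcongr
    _ = u' 0 ^ 2 * c_m / lam := by field_simp
    _ ≤ u y ^ 2 + u' y ^ 2 := hu.sq_deriv_zero_mul_div_le hc hmono hcm hlam0 hq hy
end
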